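/- arXiv:1801.07149 — 2 statements merged into one kernel-verified Lean document; each statement's English description precedes it below -/
import Mathlib

section
/- Let a < b in M ∪ {−∞,+∞} and let S ⊆ (a,b) be definable. Suppose S is invariant under the coset equivalence relation, i.e., for every x ∈ S and q ∈ Q with x + q ∈ (a,b) we have x + q ∈ S. If S is large, then (a,b) ∖ S is small. -/
open FirstOrder Language Set

/-- Functions of the language of ordered `F`-vector spaces with a predicate:
`+`, `-`, `0`, `1`, and scalar multiplication by each element of `F`. -/
inductive LPFunc (F : Type) : ℕ → Type
  | add : LPFunc F 2
  | neg : LPFunc F 1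
  | zero : LPFunc F 0
  | one : LPFunc F 0
  | smul : F → LPFunc F 1

/-- Relations: the order `<` and the unary predicate `Q`. -/
inductive LPRel : ℕ → Type
  | lt : LPRel 2
  | q : LPRel 1

/-- The language `L_P`. -/
def LP (F : Type) : Language := ⟨LPFunc F, LPRel⟩

variable (F M : Type) [Field F] [LinearOrder F] [IsStrictOrderedRing F] [AddCommGroup M] [LinearOrder M] [IsOrderedAddMonoid M] [Module F M]

/-- The natural `L_P`-structure on an ordered `F`-vector space `M` with
distinguished element `one` and predicate `Q`. -/
def LPStruc (one : M) (Q : Set M) : (LP F).Structure M where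
  funMap := fun {n} f x =>
    match n, f with
    | _, LPFunc.add => x 0 + x 1
    | _, LPFunc.neg => -(x 0)
    | _, LPFunc.zero => 0
    | _, LPFunc.one => one
    | _, LPFunc.smul c => c • x 0
  RelMap := fun {n} r x =>
    match n, r with
    | _, LPRel.lt => x 0 < x 1
    | _, LPRel.q => x 0 ∈ Q

/-- A subset of `N^n` is definable (with parameters from `N`). -/
def DefinableIn (L : Language) (N : Type) [L.Structure N] {n : ℕ} (S : Set (Fin n → N)) : Prop :=
  Set.Definable (Set.univ : Set N) L S

/-- A subset of `N` is definable (with parameters from `N`). -/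
def Definable1In (L : Language) (N : Type) [L.Structure N] (S : Set N) : Prop :=
  DefinableIn L N {x : Fin 1 → N | x 0 ∈ S}

/-- A function `N^n → N` is definable if its graph is definable. -/
def DefinableFunIn (L : Language) (N : Type) [L.Structure N] {n : ℕ}
    (f : (Fin n → N) → N) : Prop :=
  DefinableIn L N {x : Fin (n + 1) → N | x (Fin.last n) = f (fun i => x (Fin.castSucc i))}

/-- `S ⊆ N` is `P`-small: covered by the image of `Pⁿ` under a definable function. -/
def SmallIn (L : Language) (N : Type) [L.Structure N] (P : Set N) (S : Set N) : Prop :=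
  ∃ (n : ℕ) (f : (Fin n → N) → N), DefinableFunIn L N f ∧
    S ⊆ f '' {x : Fin n → N | ∀ i, x i ∈ P}

/-- Definability in the pair of ordered vector spaces. -/
def POVSDefinable (one : M) (Q : Set M) {n : ℕ} (S : Set (Fin n → M)) : Prop :=
  letI := LPStruc F M one Q
  DefinableIn (LP F) M S

/-- Definability of a unary set in the pair of ordered vector spaces. -/
def POVSDefinable1 (one : M) (Q : Set M) (S : Set M) : Prop :=
  letI := LPStruc F M one Q
  Definable1In (LP F) M S

/-- Smallness in the pair of ordered vector spaces. -/
def POVSSmall (one : M) (Q : Set M) (S : Set M) : Prop :=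
  letI := LPStruc F M one Q
  SmallIn (LP F) M Q S

/-- The embedding of `M` into `M ∪ {-∞, +∞}`. -/
def toExt (x : M) : WithBot (WithTop M) := ((x : WithTop M) : WithBot (WithTop M))

/-- The open interval `(a,b)` with endpoints from `M ∪ {-∞, +∞}`, as a subset of `M`. -/
def extIoo (a b : WithBot (WithTop M)) : Set M := {x : M | a < toExt M x ∧ toExt M x < b}

/-- The union of the cosets `c + Q` for `c ∈ C`. -/
def cosetUnion (Q : Set M) (C : Finset M) : Set M := ⋃ c ∈ C, {x : M | x - c ∈ Q}

/-- A near-interval: a nonempty set of the form `(a,b) ∩ C` or `(a,b) \ C`, where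
`a < b` in `M ∪ {-∞,+∞}` and `C` is a finite union of cosets of `Q`. -/
def NearInterval (Q : Set M) (S : Set M) : Prop :=
  S.Nonempty ∧ ∃ (a b : WithBot (WithTop M)) (C : Finset M), a < b ∧
    (S = extIoo M a b ∩ cosetUnion M Q C ∨ S = extIoo M a b \ cosetUnion M Q C)

/-!
Quantifier elimination: every definable set is a finite union of cells, a cell being a
conjunction of conditions `λ • y + k(x) < 0`, `= 0`, `∈ Q` or `∉ Q` with `k` affine. To eliminate
`∃ y` from a cell, solve an equation in `y` if there is one; otherwise use a condition
`λ • y + k(x) ∈ Q` to remove `y` from the other `Q`-conditions, and finish by Fourier–Motzkin,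
where the conditions `∉ Q` cost nothing because `M ⧸ Q` is an infinite vector space, so an
interval always meets a coset of `Q` avoiding finitely many given ones.

Hence a definable `S ⊆ M` either lies in finitely many cosets of `Q`, which makes it small, or has
a nonempty cell in which `y` occurs only in order conditions and conditions `∉ Q`. Such a cell
contains an interval minus finitely many cosets, so by density it meets `m + Q` for every `m`
outside finitely many cosets. When `S` is large we are in the second case, and invariance of `S`
under `Q` puts every point of `(a, b)` outside these cosets into `S`: `(a, b) \ S` lies in finitely
many cosets, and a finite union of cosets is small.
-/

namespace DensePair

/-- `(c, k)` stands for the affine function `x ↦ ∑ i, c i • x i + k` of `x : ι → V`. -/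
abbrev AffForm (R V ι : Type*) := (ι → R) × V

namespace AffForm

section CommRing

variable {R V ι κ : Type*} [CommRing R] [AddCommGroup V] [Module R V]

def reindex [Fintype ι] [DecidableEq κ] (σ : ι → κ) (a : AffForm R V ι) : AffForm R V κ :=
  (fun j => ∑ i with σ i = j, a.1 i, a.2)

/-- On `Option ι` the coordinate `none` plays the variable to be eliminated; this drops it. -/
def restrict (a : AffForm R V (Option ι)) : AffForm R V ι := (a.1 ∘ some, a.2)

variable [Fintype ι]

def eval (x : ι → V) : AffForm R V ι →ₗ[R] V :=
  Fintype.linearCombination R x ∘ₗ LinearMap.fst R (ι → R) V + LinearMap.snd R (ι → R) V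

theorem eval_apply (x : ι → V) (a : AffForm R V ι) : eval x a = ∑ i, a.1 i • x i + a.2 := by
  simp [eval, Fintype.linearCombination_apply]

theorem eval_const (x : ι → V) (v : V) : eval x ((0, v) : AffForm R V ι) = v := by
  simp [eval_apply]

theorem eval_single [DecidableEq ι] (x : ι → V) (i : ι) :
    eval x ((Pi.single i 1, 0) : AffForm R V ι) = x i := by
  simp [eval, Fintype.linearCombination_apply_single]

theorem eval_reindex [Fintype κ] [DecidableEq κ] (σ : ι → κ) (z : κ → V) (a : AffForm R V ι) :
    eval z (reindex σ a) = eval (z ∘ σ) a := by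
  simp only [eval_apply, reindex, Finset.sum_smul, Function.comp_apply]
  rw [← Finset.sum_fiberwise Finset.univ σ (fun i => a.1 i • z (σ i))]
  congr 1
  refine Finset.sum_congr rfl fun j _ => Finset.sum_congr rfl fun i hi => ?_
  rw [(Finset.mem_filter.1 hi).2]

theorem eval_optionElim (y : V) (x : ι → V) (a : AffForm R V (Option ι)) :
    eval (Option.elim' y x) a = a.1 none • y + eval x (restrict a) := by
  simp only [eval_apply, Fintype.sum_option, restrict, Option.elim'_none, Option.elim'_some,
    Function.comp_apply]
  abel

theorem eval_optionElim_of_coeff_none_eq_zero {a : AffForm R V (Option ι)} (ha : a.1 none = 0)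
    (y : V) (x : ι → V) : eval (Option.elim' y x) a = eval x (restrict a) := by
  rw [eval_optionElim, ha, zero_smul, zero_add]

end CommRing

section Field

variable {K V ι : Type*} [Field K] [AddCommGroup V] [Module K V]

def rootForm (a : AffForm K V (Option ι)) : AffForm K V ι := -(a.1 none)⁻¹ • restrict a

def eliminate (b a : AffForm K V (Option ι)) : AffForm K V (Option ι) :=
  a - (a.1 none / b.1 none) • b

theorem eliminate_coeff_none {b : AffForm K V (Option ι)} (hb : b.1 none ≠ 0)
    (a : AffForm K V (Option ι)) : (eliminate b a).1 none = 0 := by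
  simp [eliminate, hb]

variable [Fintype ι]

theorem eval_optionElim_eq_smul_sub_root {a : AffForm K V (Option ι)} (ha : a.1 none ≠ 0)
    (y : V) (x : ι → V) :
    eval (Option.elim' y x) a = a.1 none • (y - eval x (rootForm a)) := by
  simp [eval_optionElim, rootForm, smul_smul, ha]

theorem eval_eliminate (z : Option ι → V) (b a : AffForm K V (Option ι)) :
    eval z (eliminate b a) = eval z a - (a.1 none / b.1 none) • eval z b := by
  simp [eliminate]

end Field

end AffForm

section Literal

variable {R V ι κ : Type*} [CommRing R] [AddCommGroup V] [LinearOrder V] [Module R V]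

inductive Kind
  | lt | eq | mem | notMem
  deriving DecidableEq

def Kind.Holds (Q : Submodule R V) : Kind → V → Prop
  | .lt, v => v < 0
  | .eq, v => v = 0
  | .mem, v => v ∈ Q
  | .notMem, v => v ∉ Q

structure Literal (R V ι : Type*) where
  kind : Kind
  form : AffForm R V ι

variable (Q : Submodule R V) [Fintype ι]

def Literal.Holds (l : Literal R V ι) (x : ι → V) : Prop :=
  l.kind.Holds Q (AffForm.eval x l.form)

/-- Sets cut out by a quantifier-free formula, written in disjunctive normal form. -/
def QFDefinable (S : Set (ι → V)) : Prop :=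
  ∃ d : List (List (Literal R V ι)), S = {x | ∃ c ∈ d, ∀ l ∈ c, l.Holds Q x}

namespace QFDefinable

variable {Q}

theorem literal (l : Literal R V ι) : QFDefinable Q {x | l.Holds Q x} :=
  ⟨[ [l] ], by simp⟩

theorem empty : QFDefinable Q (∅ : Set (ι → V)) :=
  ⟨[], by simp⟩

theorem univ : QFDefinable Q (Set.univ : Set (ι → V)) :=
  ⟨[ [] ], by simp⟩

theorem union {S T : Set (ι → V)} (hS : QFDefinable Q S) (hT : QFDefinable Q T) :
    QFDefinable Q (S ∪ T) := by
  obtain ⟨d₁, rfl⟩ := hS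
  obtain ⟨d₂, rfl⟩ := hT
  exact ⟨d₁ ++ d₂, by ext; simp [or_and_right, exists_or]⟩

theorem inter {S T : Set (ι → V)} (hS : QFDefinable Q S) (hT : QFDefinable Q T) :
    QFDefinable Q (S ∩ T) := by
  obtain ⟨d₁, rfl⟩ := hS
  obtain ⟨d₂, rfl⟩ := hT
  refine ⟨(d₁ ×ˢ d₂).map fun p => p.1 ++ p.2, ?_⟩
  ext x
  simp only [Set.mem_inter_iff, Set.mem_ofPred_eq, List.mem_map, List.mem_product, Prod.exists]
  constructor
  · rintro ⟨⟨c₁, hc₁, h₁⟩, ⟨c₂, hc₂, h₂⟩⟩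
    exact ⟨_, ⟨c₁, c₂, ⟨hc₁, hc₂⟩, rfl⟩, List.forall_mem_append.2 ⟨h₁, h₂⟩⟩
  · rintro ⟨_, ⟨c₁, c₂, ⟨hc₁, hc₂⟩, rfl⟩, h⟩
    obtain ⟨h₁, h₂⟩ := List.forall_mem_append.1 h
    exact ⟨⟨c₁, hc₁, h₁⟩, ⟨c₂, hc₂, h₂⟩⟩

theorem setOf_not_holds [IsOrderedAddMonoid V] (l : Literal R V ι) :
    QFDefinable Q {x | ¬ l.Holds Q x} := by
  obtain ⟨k, a⟩ := l
  cases k with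
  | lt =>
    convert (literal ⟨.eq, a⟩).union (literal ⟨.lt, -a⟩) using 1
    ext x
    simp [Literal.Holds, Kind.Holds, le_iff_eq_or_lt, eq_comm]
  | eq =>
    convert (literal ⟨.lt, a⟩).union (literal ⟨.lt, -a⟩) using 1
    ext x
    simp [Literal.Holds, Kind.Holds, lt_or_lt_iff_ne]
  | mem => exact literal ⟨.notMem, a⟩
  | notMem => simpa [Literal.Holds, Kind.Holds] using literal (Q := Q) ⟨.mem, a⟩

theorem compl [IsOrderedAddMonoid V] {S : Set (ι → V)} (hS : QFDefinable Q S) :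
    QFDefinable Q Sᶜ := by
  obtain ⟨d, rfl⟩ := hS
  induction d with
  | nil => simpa using univ
  | cons c d ih =>
    have hc : QFDefinable Q {x | ∀ l ∈ c, l.Holds Q x}ᶜ := by
      induction c with
      | nil => simpa using empty
      | cons l c ihc =>
        convert (setOf_not_holds l).union ihc using 1
        ext x
        simp [imp_iff_not_or]
    convert hc.inter ih using 1
    ext x
    simp

theorem preimage_comp [Fintype κ] (σ : ι → κ) {S : Set (ι → V)} (hS : QFDefinable Q S) :
    QFDefinable Q ((fun z : κ → V => z ∘ σ) ⁻¹' S) := by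
  classical
  obtain ⟨d, rfl⟩ := hS
  refine ⟨d.map (List.map fun l => ⟨l.kind, AffForm.reindex σ l.form⟩), ?_⟩
  ext z
  simp [Literal.Holds, AffForm.eval_reindex]

end QFDefinable

end Literal

section Order

theorem exists_upperBounds_lt_lowerBounds {α : Type*} [LinearOrder α] [Nonempty α]
    [NoMaxOrder α] [NoMinOrder α] {L U : Set α} (hL : L.Finite) (hU : U.Finite)
    (h : ∀ l ∈ L, ∀ u ∈ U, l < u) : ∃ a ∈ upperBounds L, ∃ b ∈ lowerBounds U, a < b := by
  rcases L.eq_empty_or_nonempty with rfl | hL₀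
  · rcases U.eq_empty_or_nonempty with rfl | hU₀
    · obtain ⟨a⟩ := ‹Nonempty α›
      obtain ⟨b, hb⟩ := exists_gt a
      exact ⟨a, by simp, b, by simp, hb⟩
    · obtain ⟨u, -, hmin⟩ := Set.exists_min_image U id hU hU₀
      obtain ⟨a, ha⟩ := exists_lt u
      exact ⟨a, by simp, u, fun v hv => hmin v hv, ha⟩
  · obtain ⟨l, hl, hmax⟩ := Set.exists_max_image L id hL hL₀
    rcases U.eq_empty_or_nonempty with rfl | hU₀
    · obtain ⟨b, hb⟩ := exists_gt l
      exact ⟨l, fun v hv => hmax v hv, b, by simp, hb⟩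
    · obtain ⟨u, hu, hmin⟩ := Set.exists_min_image U id hU hU₀
      exact ⟨l, fun v hv => hmax v hv, u, fun v hv => hmin v hv, h l hl u hu⟩

variable {G : Type*} [AddCommGroup G] [LinearOrder G] [IsOrderedAddMonoid G] {Q : Set G}

theorem exists_add_mem_Ioo (hdense : ∀ a b : G, a < b → ∃ q ∈ Q, a < q ∧ q < b) (w : G)
    {u v : G} (huv : u < v) : ∃ q ∈ Q, w + q ∈ Ioo u v := by
  obtain ⟨q, hq, h₁, h₂⟩ := hdense (u - w) (v - w) (sub_lt_sub_right huv w)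
  exact ⟨q, hq, sub_lt_iff_lt_add'.1 h₁, lt_sub_iff_add_lt'.1 h₂⟩

end Order

theorem _root_.Submodule.nontrivial_of_ne_top {R V : Type*} [Ring R] [AddCommGroup V] [Module R V]
    {Q : Submodule R V} (hQ : Q ≠ ⊤) : Nontrivial V :=
  have : Nontrivial (V ⧸ Q) := Submodule.Quotient.nontrivial_iff.2 hQ
  (Submodule.Quotient.mk_surjective Q).nontrivial

section Avoid

variable {K V : Type*} [Field K] [LinearOrder K] [IsStrictOrderedRing K] [AddCommGroup V]
  [LinearOrder V] [IsOrderedAddMonoid V] [Module K V] {Q : Submodule K V}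

/-- `V ⧸ Q` is an infinite vector space, so some class `w + Q` avoids the finitely many classes
`c + Q`, and being dense it meets `(u, v)`. -/
theorem exists_mem_Ioo_forall_sub_notMem (hQ : Q ≠ ⊤)
    (hdense : ∀ a b : V, a < b → ∃ q ∈ Q, a < q ∧ q < b) {u v : V} (huv : u < v)
    (C : Finset V) : ∃ y ∈ Ioo u v, ∀ c ∈ C, y - c ∉ Q := by
  classical
  have : Nontrivial (V ⧸ Q) := Submodule.Quotient.nontrivial_iff.2 hQ
  have : Infinite (V ⧸ Q) := Module.Free.infinite K (V ⧸ Q)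
  obtain ⟨z, hz⟩ := Infinite.exists_notMem_finset (C.image (Submodule.Quotient.mk (p := Q)))
  obtain ⟨w, rfl⟩ := Submodule.Quotient.mk_surjective Q z
  obtain ⟨q, hq, hwq⟩ := exists_add_mem_Ioo hdense w huv
  refine ⟨w + q, hwq, fun c hc hwqc => hz (Finset.mem_image.2 ⟨c, hc, ?_⟩)⟩
  refine (Submodule.Quotient.eq Q).2 ?_
  convert Q.sub_mem hq hwqc using 1
  abel

end Avoid

section Fiber

variable {K V ι : Type*} [Field K] [AddCommGroup V] [LinearOrder V] [Module K V] [Fintype ι]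
  {Q : Submodule K V}

open AffForm

/-- `none` occurs in `c` only through order literals and literals `∉ Q`. -/
def IsOpenCell (c : List (Literal K V (Option ι))) : Prop :=
  ∀ l ∈ c, l.kind = .eq ∨ l.kind = .mem → l.form.1 none = 0

theorem Kind.eq_notMem {k : Kind} (hlt : k ≠ .lt) (heq : k ≠ .eq) (hmem : k ≠ .mem) :
    k = .notMem := by
  cases k <;> simp_all

namespace Literal

def restrict (l : Literal K V (Option ι)) : Literal K V ι := ⟨l.kind, AffForm.restrict l.form⟩

def eliminate (b : AffForm K V (Option ι)) (l : Literal K V (Option ι)) :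
    Literal K V (Option ι) :=
  ⟨l.kind, AffForm.eliminate b l.form⟩

def eliminateQ (b : AffForm K V (Option ι)) (l : Literal K V (Option ι)) :
    Literal K V (Option ι) :=
  if l.kind = .mem ∨ l.kind = .notMem then l.eliminate b else l

theorem holds_optionElim_of_coeff_eq_zero {l : Literal K V (Option ι)} (h : l.form.1 none = 0)
    (y : V) (x : ι → V) : l.Holds Q (Option.elim' y x) ↔ l.restrict.Holds Q x := by
  simp only [Literal.Holds, restrict, eval_optionElim_of_coeff_none_eq_zero h]

theorem holds_optionElim_iff_eq_root {l : Literal K V (Option ι)} (hk : l.kind = .eq)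
    (h : l.form.1 none ≠ 0) (y : V) (x : ι → V) :
    l.Holds Q (Option.elim' y x) ↔ y = eval x (rootForm l.form) := by
  simp [Literal.Holds, hk, Kind.Holds, eval_optionElim_eq_smul_sub_root h, h, sub_eq_zero]

theorem holds_optionElim_iff_sub_root_mem {l : Literal K V (Option ι)} (hk : l.kind = .mem)
    (h : l.form.1 none ≠ 0) (y : V) (x : ι → V) :
    l.Holds Q (Option.elim' y x) ↔ y - eval x (rootForm l.form) ∈ Q := by
  simp [Literal.Holds, hk, Kind.Holds, eval_optionElim_eq_smul_sub_root h, Q.smul_mem_iff h]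

theorem holds_optionElim_iff_sub_root_notMem {l : Literal K V (Option ι)} (hk : l.kind = .notMem)
    (h : l.form.1 none ≠ 0) (y : V) (x : ι → V) :
    l.Holds Q (Option.elim' y x) ↔ y - eval x (rootForm l.form) ∉ Q := by
  simp [Literal.Holds, hk, Kind.Holds, eval_optionElim_eq_smul_sub_root h, Q.smul_mem_iff h]

theorem holds_restrict_eliminate_iff {b : AffForm K V (Option ι)} (hb : b.1 none ≠ 0) {y : V}
    {x : ι → V} (hby : eval (Option.elim' y x) b = 0) (l : Literal K V (Option ι)) :
    (l.eliminate b).restrict.Holds Q x ↔ l.Holds Q (Option.elim' y x) := by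
  rw [← holds_optionElim_of_coeff_eq_zero (eliminate_coeff_none hb l.form) y]
  simp [Literal.Holds, eliminate, eval_eliminate, hby]

theorem holds_eliminateQ_iff {b : AffForm K V (Option ι)} {z : Option ι → V} (hb : eval z b ∈ Q)
    (l : Literal K V (Option ι)) : (l.eliminateQ b).Holds Q z ↔ l.Holds Q z := by
  have hQ : eval z (AffForm.eliminate b l.form) ∈ Q ↔ eval z l.form ∈ Q := by
    rw [eval_eliminate]
    exact Q.sub_mem_iff_left (Q.smul_mem _ hb)
  unfold eliminateQ
  split_ifs with h
  · rcases h with h | h <;> simp [Literal.Holds, eliminate, h, Kind.Holds, hQ]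
  · rfl

end Literal

theorem exists_holds_iff_of_kind_eq {c : List (Literal K V (Option ι))} {b : Literal K V (Option ι)}
    (hb : b ∈ c) (hbk : b.kind = .eq) (hb0 : b.form.1 none ≠ 0) (x : ι → V) :
    (∃ y, ∀ l ∈ c, l.Holds Q (Option.elim' y x)) ↔
      ∀ l ∈ c.map fun l => (l.eliminate b.form).restrict, l.Holds Q x := by
  have hby (y : V) (hy : b.Holds Q (Option.elim' y x)) : eval (Option.elim' y x) b.form = 0 := by
    simpa [Literal.Holds, hbk, Kind.Holds] using hy
  simp only [List.forall_mem_map]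
  constructor
  · rintro ⟨y, hy⟩ l hl
    exact (Literal.holds_restrict_eliminate_iff hb0 (hby y (hy b hb)) l).2 (hy l hl)
  · intro h
    set y := eval x (rootForm b.form)
    have hb' : eval (Option.elim' y x) b.form = 0 :=
      hby y ((b.holds_optionElim_iff_eq_root hbk hb0 y x).2 rfl)
    exact ⟨y, fun l hl => (Literal.holds_restrict_eliminate_iff hb0 hb' l).1 (h l hl)⟩

variable [LinearOrder K]

/-- Fourier–Motzkin elimination of `none`. -/
def elimCell (c : List (Literal K V (Option ι))) : List (Literal K V ι) :=
  (c.filter (·.form.1 none = 0)).map Literal.restrict ++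
    ((c.filter fun l => l.kind = .lt ∧ l.form.1 none < 0) ×ˢ
      (c.filter fun l => l.kind = .lt ∧ 0 < l.form.1 none)).map
        fun p => ⟨.lt, rootForm p.1.form - rootForm p.2.form⟩

/-- A cell equivalent to `∃ none` of the cell `c`, by the three cases of the elimination. -/
def projCell (c : List (Literal K V (Option ι))) : List (Literal K V ι) :=
  match c.find? (fun l => l.kind = .eq ∧ l.form.1 none ≠ 0) with
  | some b => c.map fun l => (l.eliminate b.form).restrict
  | none =>
    match c.find? (fun l => l.kind = .mem ∧ l.form.1 none ≠ 0) with
    | some b => elimCell (c.map (Literal.eliminateQ b.form))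
    | none => elimCell c

variable [IsOrderedAddMonoid V]

theorem holds_elimCell_iff {c : List (Literal K V (Option ι))} {x : ι → V} :
    (∀ l ∈ elimCell c, l.Holds Q x) ↔
      (∀ l ∈ c, l.form.1 none = 0 → l.restrict.Holds Q x) ∧
      ∀ lo ∈ c, lo.kind = .lt → lo.form.1 none < 0 → ∀ up ∈ c, up.kind = .lt →
        0 < up.form.1 none → eval x (rootForm lo.form) < eval x (rootForm up.form) := by
  simp only [elimCell, List.forall_mem_append, List.forall_mem_map, List.mem_filter,
    decide_eq_true_eq, and_imp, Prod.forall, List.mem_product]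
  refine and_congr_right fun _ => ⟨fun h lo hlo hk hn up hup hk' hp => ?_,
    fun h lo up hlo hk hn hup hk' hp => ?_⟩
  · simpa [Literal.Holds, Kind.Holds] using h lo up hlo hk hn hup hk' hp
  · simpa [Literal.Holds, Kind.Holds] using h lo hlo hk hn up hup hk' hp

variable [PosSMulStrictMono K V]

namespace Literal

theorem holds_optionElim_iff_lt_root {l : Literal K V (Option ι)} (hk : l.kind = .lt)
    (h : 0 < l.form.1 none) (y : V) (x : ι → V) :
    l.Holds Q (Option.elim' y x) ↔ y < eval x (rootForm l.form) := by
  simp [Literal.Holds, hk, Kind.Holds, eval_optionElim_eq_smul_sub_root h.ne',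
    smul_neg_iff_of_pos_left h]

end Literal

variable [IsStrictOrderedRing K]

namespace Literal

theorem holds_optionElim_iff_root_lt {l : Literal K V (Option ι)} (hk : l.kind = .lt)
    (h : l.form.1 none < 0) (y : V) (x : ι → V) :
    l.Holds Q (Option.elim' y x) ↔ eval x (rootForm l.form) < y := by
  simp [Literal.Holds, hk, Kind.Holds, eval_optionElim_eq_smul_sub_root h.ne,
    smul_neg_iff_of_neg_left h]

end Literal

theorem holds_elimCell_of_holds {c : List (Literal K V (Option ι))} {y : V} {x : ι → V}
    (h : ∀ l ∈ c, l.Holds Q (Option.elim' y x)) : ∀ l ∈ elimCell c, l.Holds Q x := by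
  refine holds_elimCell_iff.2
    ⟨fun l hl h0 => (l.holds_optionElim_of_coeff_eq_zero h0 y x).1 (h l hl),
      fun lo hlo hk hneg up hup hk' hpos => ?_⟩
  exact ((lo.holds_optionElim_iff_root_lt hk hneg y x).1 (h lo hlo)).trans
    ((up.holds_optionElim_iff_lt_root hk' hpos y x).1 (h up hup))

theorem exists_Ioo_of_holds_elimCell [Nontrivial V] {c : List (Literal K V (Option ι))}
    {x : ι → V} (h : ∀ l ∈ elimCell c, l.Holds Q x) :
    ∃ u v, u < v ∧ ∀ y ∈ Ioo u v, ∀ l ∈ c, l.kind = .lt ∨ l.form.1 none = 0 →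
      l.Holds Q (Option.elim' y x) := by
  obtain ⟨hzero, hbounds⟩ := holds_elimCell_iff.1 h
  set root := fun l : Literal K V (Option ι) => eval x (rootForm l.form)
  have hfin (p : Literal K V (Option ι) → Prop) : (root '' {l | l ∈ c ∧ p l}).Finite :=
    (c.finite_toSet.subset fun _ hl => hl.1).image root
  obtain ⟨u, hu, v, hv, huv⟩ := exists_upperBounds_lt_lowerBounds
    (hfin fun l => l.kind = .lt ∧ l.form.1 none < 0)
    (hfin fun l => l.kind = .lt ∧ 0 < l.form.1 none)
    (by
      rintro _ ⟨lo, ⟨hlo, hk, hneg⟩, rfl⟩ _ ⟨up, ⟨hup, hk', hpos⟩, rfl⟩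
      exact hbounds lo hlo hk hneg up hup hk' hpos)
  refine ⟨u, v, huv, fun y hy l hl hl' => ?_⟩
  rcases eq_or_ne (l.form.1 none) 0 with h0 | h0
  · exact (l.holds_optionElim_of_coeff_eq_zero h0 y x).2 (hzero l hl h0)
  have hk := hl'.resolve_right h0
  rcases h0.lt_or_gt with hneg | hpos
  · exact (l.holds_optionElim_iff_root_lt hk hneg y x).2
      ((hu ⟨l, ⟨hl, hk, hneg⟩, rfl⟩).trans_lt hy.1)
  · exact (l.holds_optionElim_iff_lt_root hk hpos y x).2
      (hy.2.trans_le (hv ⟨l, ⟨hl, hk, hpos⟩, rfl⟩))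

theorem exists_holds_iff_of_kind_mem [Nontrivial V]
    (hdense : ∀ a b : V, a < b → ∃ q ∈ Q, a < q ∧ q < b) {c : List (Literal K V (Option ι))}
    (hc : ∀ l ∈ c, l.kind = .eq → l.form.1 none = 0) {b : Literal K V (Option ι)}
    (hb : b ∈ c) (hbk : b.kind = .mem) (hb0 : b.form.1 none ≠ 0) (x : ι → V) :
    (∃ y, ∀ l ∈ c, l.Holds Q (Option.elim' y x)) ↔
      ∀ l ∈ elimCell (c.map (Literal.eliminateQ b.form)), l.Holds Q x := by
  have hbQ (z : Option ι → V) (hz : b.Holds Q z) : eval z b.form ∈ Q := by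
    simpa [Literal.Holds, hbk, Kind.Holds] using hz
  constructor
  · rintro ⟨y, hy⟩
    refine holds_elimCell_of_holds (y := y) fun l hl => ?_
    obtain ⟨l', hl', rfl⟩ := List.mem_map.1 hl
    exact (Literal.holds_eliminateQ_iff (hbQ _ (hy b hb)) l').2 (hy l' hl')
  · intro h
    obtain ⟨u, v, huv, hwin⟩ := exists_Ioo_of_holds_elimCell h
    obtain ⟨q, hq, hy⟩ :=
      exists_add_mem_Ioo (Q := (Q : Set V)) hdense (eval x (rootForm b.form)) huv
    set y := eval x (rootForm b.form) + q
    have hby : b.Holds Q (Option.elim' y x) :=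
      (b.holds_optionElim_iff_sub_root_mem hbk hb0 y x).2 (by simpa [y] using hq)
    refine ⟨y, fun l hl => (Literal.holds_eliminateQ_iff (hbQ _ hby) l).1
      (hwin y hy _ (List.mem_map_of_mem hl) ?_)⟩
    unfold Literal.eliminateQ
    split_ifs with hlQ
    · exact .inr (eliminate_coeff_none hb0 l.form)
    · by_cases hk : l.kind = .lt
      · exact .inl hk
      · obtain ⟨hmem, hnotMem⟩ := not_or.1 hlQ
        exact .inr (hc l hl (by_contra fun heq => hnotMem (Kind.eq_notMem hk heq hmem)))

theorem exists_holds_iff_holds_elimCell (hQ : Q ≠ ⊤)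
    (hdense : ∀ a b : V, a < b → ∃ q ∈ Q, a < q ∧ q < b) {c : List (Literal K V (Option ι))}
    (hc : IsOpenCell c) (x : ι → V) :
    (∃ y, ∀ l ∈ c, l.Holds Q (Option.elim' y x)) ↔ ∀ l ∈ elimCell c, l.Holds Q x := by
  classical
  have := Submodule.nontrivial_of_ne_top hQ
  refine ⟨fun ⟨y, hy⟩ => holds_elimCell_of_holds hy, fun h => ?_⟩
  obtain ⟨u, v, huv, hwin⟩ := exists_Ioo_of_holds_elimCell h
  obtain ⟨y, hy, hyC⟩ := exists_mem_Ioo_forall_sub_notMem hQ hdense huv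
    ((c.filter fun l => l.kind = .notMem).map fun l => eval x (rootForm l.form)).toFinset
  refine ⟨y, fun l hl => ?_⟩
  by_cases hl' : l.kind = .lt ∨ l.form.1 none = 0
  · exact hwin y hy l hl hl'
  obtain ⟨hlt, h0⟩ := not_or.1 hl'
  have hk : l.kind = .notMem :=
    Kind.eq_notMem hlt (fun h => h0 (hc l hl (.inl h))) (fun h => h0 (hc l hl (.inr h)))
  exact (l.holds_optionElim_iff_sub_root_notMem hk h0 y x).2
    (hyC _ (by simpa using ⟨l, ⟨hl, hk⟩, rfl⟩))

theorem exists_holds_iff_holds_projCell (hQ : Q ≠ ⊤)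
    (hdense : ∀ a b : V, a < b → ∃ q ∈ Q, a < q ∧ q < b) (c : List (Literal K V (Option ι)))
    (x : ι → V) : (∃ y, ∀ l ∈ c, l.Holds Q (Option.elim' y x)) ↔ ∀ l ∈ projCell c, l.Holds Q x := by
  have := Submodule.nontrivial_of_ne_top hQ
  have hnone {p : Literal K V (Option ι) → Prop} [DecidablePred p] (h : c.find? p = none) :
      ∀ l ∈ c, ¬ p l := by
    simpa using List.find?_eq_none.1 h
  have hsome {p : Literal K V (Option ι) → Prop} [DecidablePred p] {b} (h : c.find? p = some b) :
      b ∈ c ∧ p b :=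
    ⟨List.mem_of_find?_eq_some h, by simpa using List.find?_some h⟩
  unfold projCell
  split
  · next b hb =>
    obtain ⟨hbc, hbk, hb0⟩ := hsome hb
    exact exists_holds_iff_of_kind_eq hbc hbk hb0 x
  · next heq =>
    split
    · next b hb =>
      obtain ⟨hbc, hbk, hb0⟩ := hsome hb
      exact exists_holds_iff_of_kind_mem hdense
        (fun l hl hk => by simpa [hk] using hnone heq l hl) hbc hbk hb0 x
    · next hmem =>
      refine exists_holds_iff_holds_elimCell hQ hdense (fun l hl hk => ?_) x
      rcases hk with hk | hk
      · simpa [hk] using hnone heq l hl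
      · simpa [hk] using hnone hmem l hl

theorem QFDefinable.exists_optionElim (hQ : Q ≠ ⊤)
    (hdense : ∀ a b : V, a < b → ∃ q ∈ Q, a < q ∧ q < b) {S : Set (Option ι → V)}
    (hS : QFDefinable Q S) : QFDefinable Q {x | ∃ y, Option.elim' y x ∈ S} := by
  obtain ⟨d, rfl⟩ := hS
  refine ⟨d.map projCell, ?_⟩
  ext x
  simp only [Set.mem_ofPred_eq, List.mem_map, exists_exists_and_eq_and]
  constructor
  · rintro ⟨y, c, hc, hy⟩
    exact ⟨c, hc, (exists_holds_iff_holds_projCell hQ hdense c x).1 ⟨y, hy⟩⟩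
  · rintro ⟨c, hc, h⟩
    obtain ⟨y, hy⟩ := (exists_holds_iff_holds_projCell hQ hdense c x).2 h
    exact ⟨y, c, hc, hy⟩

theorem exists_add_mem_holds [Nontrivial V] (hdense : ∀ a b : V, a < b → ∃ q ∈ Q, a < q ∧ q < b)
    {c : List (Literal K V (Option ι))} (hc : IsOpenCell c) {y₀ : V} {x : ι → V} (hy₀ : ∀ l ∈ c, l.Holds Q (Option.elim' y₀ x)) {m : V}
    (hm : ∀ l ∈ c, l.kind = .notMem → m - eval x (rootForm l.form) ∉ Q) :
    ∃ q ∈ Q, ∀ l ∈ c, l.Holds Q (Option.elim' (m + q) x) := by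
  obtain ⟨u, v, huv, hwin⟩ := exists_Ioo_of_holds_elimCell (holds_elimCell_of_holds hy₀)
  obtain ⟨q, hq, hmq⟩ := exists_add_mem_Ioo (Q := (Q : Set V)) hdense m huv
  refine ⟨q, hq, fun l hl => ?_⟩
  by_cases hl' : l.kind = .lt ∨ l.form.1 none = 0
  · exact hwin _ hmq l hl hl'
  obtain ⟨hlt, h0⟩ := not_or.1 hl'
  have hk : l.kind = .notMem :=
    Kind.eq_notMem hlt (fun h => h0 (hc l hl (.inl h))) (fun h => h0 (hc l hl (.inr h)))
  refine (l.holds_optionElim_iff_sub_root_notMem hk h0 _ x).2 fun hmem => hm l hl hk ?_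
  convert Q.sub_mem hmem hq using 1
  abel

theorem QFDefinable.fiber_subset_or_exists_add_mem [Nontrivial V]
    (hdense : ∀ a b : V, a < b → ∃ q ∈ Q, a < q ∧ q < b) {S : Set (Option ι → V)}
    (hS : QFDefinable Q S) (x : ι → V) :
    (∃ C : Finset V, ∀ y, Option.elim' y x ∈ S → ∃ c ∈ C, y - c ∈ Q) ∨
      ∃ C : Finset V, ∀ m, (∀ c ∈ C, m - c ∉ Q) → ∃ q ∈ Q, Option.elim' (m + q) x ∈ S := by
  classical
  obtain ⟨d, rfl⟩ := hS
  by_cases hopen : ∃ c ∈ d, IsOpenCell c ∧ ∃ y₀, ∀ l ∈ c, l.Holds Q (Option.elim' y₀ x)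
  · obtain ⟨c, hc, hco, y₀, hy₀⟩ := hopen
    refine .inr
      ⟨((c.filter fun l => l.kind = .notMem).map fun l => eval x (rootForm l.form)).toFinset,
      fun m hm => ?_⟩
    obtain ⟨q, hq, hmq⟩ := exists_add_mem_holds hdense hco hy₀ (m := m)
      fun l hl hk => hm _ (by simpa using ⟨l, ⟨hl, hk⟩, rfl⟩)
    exact ⟨q, hq, c, hc, hmq⟩
  refine .inl ⟨((d.flatten.filter fun l => (l.kind = .eq ∨ l.kind = .mem) ∧ l.form.1 none ≠ 0).map
    fun l => eval x (rootForm l.form)).toFinset, ?_⟩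
  rintro y ⟨c, hc, hy⟩
  obtain ⟨l, hl, hk, h0⟩ : ∃ l ∈ c, (l.kind = .eq ∨ l.kind = .mem) ∧ l.form.1 none ≠ 0 := by
    by_contra! hco
    exact hopen ⟨c, hc, fun l hl hk => hco l hl hk, y, hy⟩
  refine ⟨eval x (rootForm l.form), List.mem_toFinset.2 (List.mem_map.2
    ⟨l, List.mem_filter.2 ⟨List.mem_flatten.2 ⟨c, hc, hl⟩, by simp [hk, h0]⟩, rfl⟩), ?_⟩
  rcases hk with hk | hk
  · rw [(l.holds_optionElim_iff_eq_root hk h0 y x).1 (hy l hl), sub_self]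
    exact Q.zero_mem
  · exact (l.holds_optionElim_iff_sub_root_mem hk h0 y x).1 (hy l hl)

theorem QFDefinable.setOf_forall_snoc (hQ : Q ≠ ⊤)
    (hdense : ∀ a b : V, a < b → ∃ q ∈ Q, a < q ∧ q < b) {α : Type*} [Fintype α] {k : ℕ}
    {P : (α → V) → (Fin (k + 1) → V) → Prop}
    (hP : QFDefinable Q {v : α ⊕ Fin (k + 1) → V | P (v ∘ Sum.inl) (v ∘ Sum.inr)}) :
    QFDefinable Q {v : α ⊕ Fin k → V | ∀ y, P (v ∘ Sum.inl) (Fin.snoc (v ∘ Sum.inr) y)} := by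
  let σ : α ⊕ Fin (k + 1) → Option (α ⊕ Fin k) :=
    Sum.elim (fun a => some (.inl a)) (Fin.lastCases none fun j => some (.inr j))
  convert ((hP.preimage_comp σ).compl.exists_optionElim hQ hdense).compl using 1
  ext v
  simp only [Set.mem_ofPred_eq, Set.mem_compl_iff, Set.mem_preimage, not_exists, not_not]
  refine forall_congr' fun y => ?_
  have hσ : (Option.elim' y v ∘ σ) ∘ Sum.inr = Fin.snoc (v ∘ Sum.inr) y := by
    funext i
    cases i using Fin.lastCases <;> simp [σ]
  rw [hσ]
  rfl

end Fiber

section Formula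

variable {F M : Type} [Field F] [AddCommGroup M] [LinearOrder M] [Module F M] {one : M}
  {Q : Submodule F M}

theorem exists_affForm_realize {ι : Type*} [Fintype ι]
    (t : ((LP F)[[(Set.univ : Set M)]]).Term ι) :
    letI := LPStruc F M one (Q : Set M)
    ∃ a : AffForm F M ι, ∀ x, t.realize x = AffForm.eval x a := by
  classical
  induction t with
  | var i => exact ⟨(Pi.single i 1, 0), fun x => (AffForm.eval_single x i).symm⟩
  | @func l f ts ih =>
    rcases f with f | c
    · choose a ha using ih
      cases f with
      | add => exact ⟨a 0 + a 1, fun x => by rw [map_add, ← ha, ← ha]; rfl⟩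
      | neg => exact ⟨-a 0, fun x => by rw [map_neg, ← ha]; rfl⟩
      | zero => exact ⟨0, fun x => by rw [map_zero]; rfl⟩
      | one => exact ⟨(0, one), fun x => by rw [AffForm.eval_const]; rfl⟩
      | smul r => exact ⟨r • a 0, fun x => by rw [map_smul, ← ha]; rfl⟩
    · cases l with
      | zero => exact ⟨(0, c), fun x => by rw [AffForm.eval_const]; rfl⟩
      | succ => exact isEmptyElim c

variable [LinearOrder F] [IsStrictOrderedRing F] [IsOrderedAddMonoid M] [PosSMulStrictMono F M]

theorem qfDefinable_setOf_realize (hQ : Q ≠ ⊤)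
    (hdense : ∀ a b : M, a < b → ∃ q ∈ Q, a < q ∧ q < b) {α : Type*} [Fintype α] {n : ℕ}
    (φ : ((LP F)[[(Set.univ : Set M)]]).BoundedFormula α n) :
    letI := LPStruc F M one (Q : Set M)
    QFDefinable Q {v : α ⊕ Fin n → M | φ.Realize (v ∘ Sum.inl) (v ∘ Sum.inr)} := by
  induction φ with
  | falsum => simpa [BoundedFormula.Realize] using QFDefinable.empty
  | equal t₁ t₂ =>
    obtain ⟨a₁, h₁⟩ := exists_affForm_realize (one := one) (Q := Q) t₁
    obtain ⟨a₂, h₂⟩ := exists_affForm_realize (one := one) (Q := Q) t₂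
    convert QFDefinable.literal (Q := Q) ⟨.eq, a₁ - a₂⟩ using 1
    ext v
    simp [BoundedFormula.Realize, h₁, h₂, Literal.Holds, Kind.Holds, sub_eq_zero]
  | rel R ts =>
    rcases R with R | R
    · choose a ha using fun i => exists_affForm_realize (one := one) (Q := Q) (ts i)
      cases R with
      | lt =>
        convert QFDefinable.literal (Q := Q) ⟨.lt, a 0 - a 1⟩ using 1
        ext v
        simp only [Set.mem_ofPred_eq, BoundedFormula.Realize, Sum.elim_comp_inl_inr, Literal.Holds,
          Kind.Holds, map_sub, ← ha, sub_neg]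
        rfl
      | q =>
        convert QFDefinable.literal (Q := Q) ⟨.mem, a 0⟩ using 1
        ext v
        simp only [Set.mem_ofPred_eq, BoundedFormula.Realize, Sum.elim_comp_inl_inr, Literal.Holds,
          Kind.Holds, ← ha]
        rfl
    · exact isEmptyElim R
  | imp φ ψ ihφ ihψ =>
    convert ihφ.compl.union ihψ using 1
    ext v
    simp [imp_iff_not_or]
  | all φ ih => simpa only [BoundedFormula.realize_all] using ih.setOf_forall_snoc hQ hdense

end Formula

section Small

variable {L : Language} {N : Type} [L.Structure N]

theorem definableIn_setOf_eq {n : ℕ} (i : Fin n) (c : N) :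
    DefinableIn L N {z : Fin n → N | z i = c} :=
  ⟨(Term.var i).equal (L.con ⟨c, Set.mem_univ c⟩).term, by ext; simp⟩

theorem DefinableFunIn.comp_reindex {n m : ℕ} {f : (Fin n → N) → N} (hf : DefinableFunIn L N f)
    (σ : Fin n → Fin m) : DefinableFunIn L N fun z : Fin m → N => f (z ∘ σ) := by
  unfold DefinableFunIn DefinableIn
  convert hf.preimage_comp (Fin.lastCases (Fin.last m) (Fin.castSucc ∘ σ)) using 1
  ext w
  simp [Function.comp_def]

theorem DefinableFunIn.ite {n : ℕ} {P : Set (Fin n → N)} [DecidablePred (· ∈ P)]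
    {f g : (Fin n → N) → N} (hP : DefinableIn L N P) (hf : DefinableFunIn L N f)
    (hg : DefinableFunIn L N g) : DefinableFunIn L N fun z => if z ∈ P then f z else g z := by
  have hP' := hP.preimage_comp (Fin.castSucc : Fin n → Fin (n + 1))
  unfold DefinableFunIn DefinableIn
  convert (hP'.inter hf).union (hP'.compl.inter hg) using 1
  ext w
  by_cases hw : (fun i => w (Fin.castSucc i)) ∈ P <;> simp [hw, Function.comp_def]

theorem SmallIn.mono {P S T : Set N} (hT : SmallIn L N P T) (h : S ⊆ T) : SmallIn L N P S :=
  let ⟨n, f, hf, hT⟩ := hT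
  ⟨n, f, hf, h.trans hT⟩

/-- The last coordinate, ranging over two distinct points of `P`, selects which of the two
functions to apply. -/
theorem SmallIn.union {P S T : Set N} {p₀ p₁ : N} (hp₀ : p₀ ∈ P) (hp₁ : p₁ ∈ P) (hne : p₀ ≠ p₁)
    (hS : SmallIn L N P S) (hT : SmallIn L N P T) : SmallIn L N P (S ∪ T) := by
  classical
  obtain ⟨n, f, hf, hSf⟩ := hS
  obtain ⟨m, g, hg, hTg⟩ := hT
  let σf : Fin n → Fin (n + m + 1) := fun i => (Fin.castAdd m i).castSucc
  let σg : Fin m → Fin (n + m + 1) := fun i => (Fin.natAdd n i).castSucc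
  refine ⟨n + m + 1, fun z => if z ∈ {z | z (Fin.last _) = p₀} then f (z ∘ σf) else g (z ∘ σg),
    DefinableFunIn.ite (definableIn_setOf_eq _ _) (DefinableFunIn.comp_reindex hf σf)
      (DefinableFunIn.comp_reindex hg σg), ?_⟩
  rintro y (hy | hy)
  · obtain ⟨x, hx, rfl⟩ := hSf hy
    refine ⟨Fin.snoc (Fin.append x fun _ => p₀) p₀, fun i => ?_, ?_⟩
    · cases i using Fin.lastCases with
      | last => simpa using hp₀
      | cast i =>
        cases i using Fin.addCases <;>
          simp only [Fin.snoc_castSucc, Fin.append_left, Fin.append_right, hx _, hp₀]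
    · simp only [Set.mem_ofPred_eq, Fin.snoc_last, if_true, σf, Function.comp_def,
        Fin.snoc_castSucc, Fin.append_left]
  · obtain ⟨x, hx, rfl⟩ := hTg hy
    refine ⟨Fin.snoc (Fin.append (fun _ => p₀) x) p₁, fun i => ?_, ?_⟩
    · cases i using Fin.lastCases with
      | last => simpa using hp₁
      | cast i =>
        cases i using Fin.addCases <;>
          simp only [Fin.snoc_castSucc, Fin.append_left, Fin.append_right, hx _, hp₀]
    · simp only [Set.mem_ofPred_eq, Fin.snoc_last, hne.symm, if_false, σg, Function.comp_def,
        Fin.snoc_castSucc, Fin.append_right]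

end Small

section POVS

variable {F M : Type} [Field F] [AddCommGroup M] [LinearOrder M] [Module F M] {one : M}
  {Q : Submodule F M}

theorem povsSmall_setOf_sub_mem (c : M) : POVSSmall F M one Q {x | x - c ∈ Q} := by
  let _ := LPStruc F M one (Q : Set M)
  refine ⟨1, fun x => x 0 + c, ⟨(Term.var (Fin.last 1)).equal (Term.func (Sum.inl LPFunc.add)
    ![Term.var 0, ((LP F).con ⟨c, Set.mem_univ c⟩).term]), ?_⟩,
    fun x hx => ⟨fun _ => x - c, fun _ => hx, sub_add_cancel x c⟩⟩
  ext x
  simp only [Set.mem_ofPred_eq, Formula.realize_equal, Term.realize_var]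
  rfl

theorem povsSmall_cosetUnion (hQ : Q ≠ ⊥) (C : Finset M) :
    POVSSmall F M one Q (cosetUnion M Q C) := by
  classical
  let _ := LPStruc F M one (Q : Set M)
  obtain ⟨q, hq, hq0⟩ := Q.ne_bot_iff.1 hQ
  induction C using Finset.induction_on with
  | empty => exact SmallIn.mono (povsSmall_setOf_sub_mem 0) (by simp [cosetUnion])
  | insert c C _ ih =>
    rw [cosetUnion, Finset.set_biUnion_insert]
    exact SmallIn.union Q.zero_mem hq hq0.symm (povsSmall_setOf_sub_mem c) ih

variable [LinearOrder F] [IsStrictOrderedRing F] [IsOrderedAddMonoid M] [PosSMulStrictMono F M]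

theorem POVSDefinable.qfDefinable (hQ : Q ≠ ⊤)
    (hdense : ∀ a b : M, a < b → ∃ q ∈ Q, a < q ∧ q < b) {n : ℕ} {S : Set (Fin n → M)}
    (hS : POVSDefinable F M one Q S) : QFDefinable Q S := by
  obtain ⟨φ, rfl⟩ := hS
  convert (qfDefinable_setOf_realize (one := one) hQ hdense φ).preimage_comp
    (Sum.elim id finZeroElim : Fin n ⊕ Fin 0 → Fin n) using 1
  ext x
  simp only [Set.mem_ofPred_eq, Set.mem_preimage, Formula.Realize]
  congr!

end POVS

end DensePair

open DensePair in
theorem statement6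
    (hsmul : ∀ (c : F) (x : M), 0 < c → 0 < x → 0 < c • x)
    (one : M)
    (Q : Submodule F M) (hQproper : (Q : Set M) ≠ Set.univ)
    (hQdense : ∀ a b : M, a < b → ∃ q ∈ Q, a < q ∧ q < b)
    (a b : WithBot (WithTop M))
    (S : Set M)
    (hS : POVSDefinable1 F M one (Q : Set M) S)
    (hinv : ∀ x ∈ S, ∀ q ∈ Q, x + q ∈ extIoo M a b → x + q ∈ S)
    (hlarge : ¬ POVSSmall F M one (Q : Set M) S) :
    POVSSmall F M one (Q : Set M) (extIoo M a b \ S) := by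
  have : PosSMulStrictMono F M :=
    ⟨fun c hc x y hxy => by simpa [smul_sub] using hsmul c (y - x) hc (sub_pos.2 hxy)⟩
  have hQ : Q ≠ ⊤ := fun h => hQproper (by simp [h])
  have := Submodule.nontrivial_of_ne_top hQ
  have hQbot : Q ≠ ⊥ := by
    obtain ⟨e, he⟩ := exists_zero_lt (α := M)
    obtain ⟨q, hq, hq0, -⟩ := hQdense 0 e he
    exact Q.ne_bot_iff.2 ⟨q, hq, hq0.ne'⟩
  have hS' : QFDefinable Q {z : Option (Fin 0) → M | z none ∈ S} :=
    (POVSDefinable.qfDefinable (S := {x : Fin 1 → M | x 0 ∈ S}) hQ hQdense hS).preimage_comp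
      fun _ => none
  let _ := LPStruc F M one (Q : Set M)
  rcases hS'.fiber_subset_or_exists_add_mem hQdense Fin.elim0 with ⟨C, hC⟩ | ⟨C, hC⟩
  · refine absurd (SmallIn.mono (povsSmall_cosetUnion hQbot C) fun y hy => ?_) hlarge
    simpa [cosetUnion] using hC y hy
  · refine SmallIn.mono (povsSmall_cosetUnion hQbot C) fun m hm => ?_
    by_contra hmC
    obtain ⟨q, hq, hmq⟩ := hC m (by simpa [cosetUnion] using hmC)
    exact hm.2 (by simpa using hinv (m + q) hmq (-q) (Q.neg_mem hq) (by simpa using hm.1))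
end

section
/- Let S ⊆ M be definable and let f : S → M be a function whose graph is definable. Then there are a finite set X ⊆ S and finitely many pairwise disjoint definable sets U₁,…,U_k, each a finite union of near-intervals, such that S = X ∪ U₁ ∪ ⋯ ∪ U_k and for each ℓ ≤ k there are α_ℓ ∈ F and c_ℓ ∈ M with f(x) = α_ℓ x + c_ℓ for all x ∈ U_ℓ. -/
open FirstOrder Language Set

variable (F M : Type) [Field F] [LinearOrder F] [IsStrictOrderedRing F] [AddCommGroup M] [LinearOrder M] [IsOrderedAddMonoid M] [Module F M]

/-!
Every definable set is quantifier-free: a finite union of cells, each cell a finite conjunction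
of conditions `t = 0`, `0 < t`, `t < 0`, `t ∈ Q`, `t ∉ Q` on affine forms `t`. Such sets form a
Boolean algebra, and they are closed under projection. To eliminate `∃ y` from a cell, solve each
condition for `y`: it becomes `y = b`, `b < y`, `y < b`, `y - b ∈ Q` or `y - b ∉ Q` for an
affine form `b` in the remaining variables. If an equation occurs, substitute it. Otherwise, since
the cosets of `Q` are dense and there are infinitely many of them, a solution `y` exists exactly
when the bounds are pairwise compatible, and compatibility is again quantifier-free.

Now apply this to the graph of `f`. If a cell of the graph contains an equation `y = α • x + c`,
then `f` is affine on the projection of that cell. If it contains no equation, the fibre over each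
`x` is empty or has at least two points. Since the fibres of a graph have at most one point, the
projection is empty. In one variable every cell is either a subsingleton or a near-interval. So we
make the projections disjoint and collect the subsingleton cells into `X`.
-/

namespace POVS

inductive Cond | zero | pos | neg | mem | nmem

section QF

variable {K V : Type*} [Field K] [AddCommGroup V] [Module K V]
variable {γ δ : Type*} [Fintype γ] [Fintype δ]

def affEval (x : γ → V) : (γ → K) × V →ₗ[K] V :=
  (Fintype.linearCombination K x).coprod LinearMap.id

lemma affEval_apply (x : γ → V) (a : (γ → K) × V) : affEval x a = ∑ i, a.1 i • x i + a.2 := rfl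

lemma affEval_sumElim (x : γ → V) (y : V) (a : (γ ⊕ Fin 1 → K) × V) :
    affEval (Sum.elim x fun _ => y) a = a.1 (.inr 0) • y + affEval x (a.1 ∘ .inl, a.2) := by
  simp only [affEval_apply, Fintype.sum_sum_type, Fin.sum_univ_one, Sum.elim_inl, Sum.elim_inr,
    Function.comp_apply]
  abel

lemma affEval_comp_equiv (e : γ ≃ δ) (x : δ → V) (a : (γ → K) × V) :
    affEval (x ∘ e) a = affEval x (a.1 ∘ e.symm, a.2) := by
  simp only [affEval_apply, Function.comp_apply]
  congr 1
  exact Fintype.sum_equiv e _ _ fun i => by simp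

variable [LinearOrder V]

namespace Cond

def Holds (Q : Set V) : Cond → V → Prop
  | zero, z => z = 0
  | pos, z => 0 < z
  | neg, z => z < 0
  | mem, z => z ∈ Q
  | nmem, z => z ∉ Q

def negs : Cond → List Cond
  | zero => [pos, neg]
  | pos => [zero, neg]
  | neg => [zero, pos]
  | mem => [nmem]
  | nmem => [mem]

lemma not_holds_iff {Q : Set V} (k : Cond) (z : V) :
    ¬ k.Holds Q z ↔ ∃ k' ∈ k.negs, k'.Holds Q z := by
  cases k <;> simp only [Holds, negs, List.mem_cons, List.not_mem_nil, or_false,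
    exists_eq_or_imp, exists_eq_left, not_not]
  · rw [← ne_eq, ne_iff_lt_or_gt, or_comm]
  · rw [not_lt, le_iff_lt_or_eq, or_comm]
  · rw [not_lt, le_iff_eq_or_lt, eq_comm]

end Cond

/-- The literal `(k, (c, m))` in the variables `x : γ → V` is the condition `k` on the affine form
`∑ i, c i • x i + m`. -/
abbrev Literal (K V γ : Type*) := Cond × ((γ → K) × V)

def cellSet (Q : Set V) (ls : List (Literal K V γ)) : Set (γ → V) :=
  {x | ∀ L ∈ ls, L.1.Holds Q (affEval x L.2)}

variable (K) in
def IsQF (Q : Set V) (S : Set (γ → V)) : Prop :=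
  ∃ lss : List (List (Literal K V γ)), S = ⋃ ls ∈ lss, cellSet Q ls

variable {Q : Set V}

lemma cellSet_append (ls ms : List (Literal K V γ)) :
    cellSet Q (ls ++ ms) = cellSet Q ls ∩ cellSet Q ms := by
  ext x; simp [cellSet, or_imp, forall_and]

lemma isQF_cellSet (ls : List (Literal K V γ)) : IsQF K Q (cellSet Q ls) := ⟨[ls], by simp⟩

lemma isQF_empty : IsQF K Q (∅ : Set (γ → V)) := ⟨[], by simp⟩

lemma isQF_univ : IsQF K Q (univ : Set (γ → V)) := ⟨[ [] ], by simp [cellSet]⟩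

namespace IsQF

variable {S T : Set (γ → V)}

lemma union (hS : IsQF K Q S) (hT : IsQF K Q T) : IsQF K Q (S ∪ T) := by
  obtain ⟨lss, rfl⟩ := hS; obtain ⟨mss, rfl⟩ := hT
  exact ⟨lss ++ mss, by simp [iUnion_or, iUnion_union_distrib]⟩

lemma inter (hS : IsQF K Q S) (hT : IsQF K Q T) : IsQF K Q (S ∩ T) := by
  obtain ⟨lss, rfl⟩ := hS; obtain ⟨mss, rfl⟩ := hT
  refine ⟨lss.flatMap fun ls => mss.map (ls ++ ·), ?_⟩
  ext x
  simp only [iUnion_inter, inter_iUnion, mem_iUnion, List.mem_flatMap, List.mem_map, exists_prop]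
  constructor
  · rintro ⟨ms, hms, ls, hls, hx⟩
    exact ⟨_, ⟨ls, hls, ms, hms, rfl⟩, by rwa [cellSet_append]⟩
  · rintro ⟨_, ⟨ls, hls, ms, hms, rfl⟩, hx⟩
    exact ⟨ms, hms, ls, hls, by rwa [cellSet_append] at hx⟩

lemma biUnion {ι : Type*} {S : ι → Set (γ → V)} (l : List ι) (h : ∀ i ∈ l, IsQF K Q (S i)) :
    IsQF K Q (⋃ i ∈ l, S i) := by
  induction l with
  | nil => simpa using isQF_empty
  | cons i l ih =>
    simpa [iUnion_or, iUnion_union_distrib] using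
      (h i (by simp)).union (ih fun j hj => h j (by simp [hj]))

lemma biInter {ι : Type*} {S : ι → Set (γ → V)} (l : List ι) (h : ∀ i ∈ l, IsQF K Q (S i)) :
    IsQF K Q (⋂ i ∈ l, S i) := by
  induction l with
  | nil => simpa using isQF_univ
  | cons i l ih =>
    simpa [iInter_or, iInter_inter_distrib] using
      (h i (by simp)).inter (ih fun j hj => h j (by simp [hj]))

lemma compl (hS : IsQF K Q S) : IsQF K Q Sᶜ := by
  obtain ⟨lss, rfl⟩ := hS
  have hcell (ls : List (Literal K V γ)) :
      (cellSet Q ls)ᶜ = ⋃ L ∈ ls, ⋃ k ∈ L.1.negs, cellSet Q [(k, L.2)] := by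
    ext x; simp [cellSet, Cond.not_holds_iff]
  simp only [compl_iUnion, hcell]
  exact biInter lss fun ls _ => biUnion ls fun L _ => biUnion _ fun k _ => isQF_cellSet _

lemma sdiff (hS : IsQF K Q S) (hT : IsQF K Q T) : IsQF K Q (S \ T) := hS.inter hT.compl

lemma preimage_comp_equiv (e : γ ≃ δ) (hS : IsQF K Q S) :
    IsQF K Q ((fun x : δ → V => x ∘ e) ⁻¹' S) := by
  obtain ⟨lss, rfl⟩ := hS
  have hcell (ls : List (Literal K V γ)) : (fun x : δ → V => x ∘ e) ⁻¹' cellSet Q ls =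
      cellSet Q (ls.map fun L => (L.1, (L.2.1 ∘ e.symm, L.2.2))) := by
    ext x
    simp only [cellSet, mem_preimage, mem_ofPred_eq, List.forall_mem_map, affEval_comp_equiv]
  rw [preimage_iUnion₂]
  exact biUnion lss fun ls _ => hcell ls ▸ isQF_cellSet _

lemma biUnion_finset {ι : Type*} {S : ι → Set (γ → V)} (s : Finset ι)
    (h : ∀ i ∈ s, IsQF K Q (S i)) : IsQF K Q (⋃ i ∈ s, S i) := by
  simpa using biUnion s.toList fun i hi => h i (Finset.mem_toList.1 hi)

end IsQF

variable (K) in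
def IsQF1 (Q : Set V) (T : Set V) : Prop := IsQF K Q ((fun x : Fin 1 → V => x 0) ⁻¹' T)

namespace IsQF1

variable {A B : Set V}

lemma sdiff (hA : IsQF1 K Q A) (hB : IsQF1 K Q B) : IsQF1 K Q (A \ B) := IsQF.sdiff hA hB

lemma biUnion_finset {ι : Type*} {T : ι → Set V} (s : Finset ι) (h : ∀ i ∈ s, IsQF1 K Q (T i)) :
    IsQF1 K Q (⋃ i ∈ s, T i) := by
  simpa [IsQF1, preimage_iUnion₂] using IsQF.biUnion_finset s h

end IsQF1

end QF

section ExtendedOrder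

variable {V : Type}

lemma exists_toExt_eq {z : WithBot (WithTop V)} (h₁ : z ≠ ⊥) (h₂ : z ≠ ⊤) :
    ∃ v, toExt V v = z := by
  obtain ⟨w, rfl⟩ := WithBot.ne_bot_iff_exists.1 h₁
  obtain ⟨v, rfl⟩ : ∃ v : V, ↑v = w :=
    WithTop.ne_top_iff_exists.1 (by rintro rfl; exact h₂ rfl)
  exact ⟨v, rfl⟩

variable [LinearOrder V]

lemma toExt_lt_toExt {x y : V} : toExt V x < toExt V y ↔ x < y := by simp [toExt]

lemma exists_extIoo_eq {L U : Set V} (hL : L.Finite) (hU : U.Finite) :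
    ∃ a b, extIoo V a b = {y | (∀ l ∈ L, l < y) ∧ ∀ u ∈ U, y < u} ∧
      ((∀ l ∈ L, ∀ u ∈ U, l < u) → a < b) := by
  have hbot (y : V) : ⊥ < toExt V y := WithBot.bot_lt_coe _
  have htop (y : V) : toExt V y < ⊤ := WithBot.coe_lt_coe.2 (WithTop.coe_lt_top y)
  refine ⟨hL.toFinset.sup (toExt V), hU.toFinset.inf (toExt V), ?_, fun h => ?_⟩
  · ext y
    simp [extIoo, Finset.sup_lt_iff (hbot y), Finset.lt_inf_iff (htop y), toExt_lt_toExt]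
  · rw [Finset.sup_lt_iff ((Finset.lt_inf_iff bot_lt_top).2 fun u _ => hbot u)]
    intro l hl
    rw [Finset.lt_inf_iff (htop l)]
    intro u hu
    simpa [toExt_lt_toExt] using h l (by simpa using hl) u (by simpa using hu)

end ExtendedOrder

section Constraints

variable {V : Type}

def boundSet (cs : List (Cond × V)) (k : Cond) : Set V := {b | (k, b) ∈ cs}

lemma finite_boundSet (cs : List (Cond × V)) (k : Cond) : (boundSet cs k).Finite :=
  (List.finite_toSet cs).preimage (Prod.mk_right_injective k).injOn

variable [AddCommGroup V]

def cosetSet (Q : Set V) (S R : Set V) : Set V := {y | (∀ s ∈ S, y - s ∈ Q) ∧ ∀ r ∈ R, y - r ∉ Q}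

variable [LinearOrder V]

def solSet (Q : Set V) (cs : List (Cond × V)) : Set V := {y | ∀ c ∈ cs, c.1.Holds Q (y - c.2)}

lemma solSet_subset_singleton {Q : Set V} {cs : List (Cond × V)} {b : V}
    (hb : (Cond.zero, b) ∈ cs) : solSet Q cs ⊆ {b} :=
  fun _ hy => sub_eq_zero.1 (hy _ hb)

variable [IsOrderedAddMonoid V]

lemma solSet_eq_inter {Q : Set V} {cs : List (Cond × V)} (hcs : ∀ c ∈ cs, c.1 ≠ .zero) :
    solSet Q cs = {y | (∀ l ∈ boundSet cs .pos, l < y) ∧ ∀ u ∈ boundSet cs .neg, y < u} ∩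
      cosetSet Q (boundSet cs .mem) (boundSet cs .nmem) := by
  ext y
  simp only [solSet, boundSet, cosetSet, mem_inter_iff]
  constructor
  · intro h
    exact ⟨⟨fun l hl => sub_pos.1 (h _ hl), fun u hu => sub_neg.1 (h _ hu)⟩,
      fun s hs => h _ hs, fun r hr => h _ hr⟩
  · rintro ⟨⟨hpos, hneg⟩, hmem, hnmem⟩ ⟨k, b⟩ hc
    cases k
    · exact absurd rfl (hcs _ hc)
    · exact sub_pos.2 (hpos b hc)
    · exact sub_neg.2 (hneg b hc)
    · exact hmem b hc
    · exact hnmem b hc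

end Constraints

section Cosets

variable {K V : Type} [Field K] [AddCommGroup V] [Module K V] {Q : Submodule K V}

lemma exists_forall_sub_notMem [Infinite K] (hQ : Q ≠ ⊤) {R : Set V} (hR : R.Finite) :
    ∃ c, ∀ r ∈ R, c - r ∉ Q := by
  obtain ⟨d, hd⟩ : ∃ d, d ∉ Q := by
    by_contra! h
    exact hQ (eq_top_iff.2 fun x _ => h x)
  by_contra! h
  have : Finite R := hR
  -- two of the points `t • d`, `t ∈ K`, lie in the same coset `r + Q`
  choose r hr hrQ using fun t : K => h (t • d)
  obtain ⟨s, t, hst, heq⟩ :=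
    Finite.exists_ne_map_eq_of_infinite fun t : K => (⟨r t, hr t⟩ : R)
  have hmem : (s - t) • d ∈ Q := by
    have := Q.sub_mem (hrQ s) (hrQ t)
    rwa [Subtype.mk.inj heq, sub_sub_sub_cancel_right, ← sub_smul] at this
  exact hd ((Q.smul_mem_iff (sub_ne_zero.2 hst)).1 hmem)

lemma exists_mem_cosetSet [Infinite K] (hQ : Q ≠ ⊤) {S R : Set V} (hR : R.Finite)
    (hSS : ∀ s ∈ S, ∀ s' ∈ S, s - s' ∈ Q) (hSR : ∀ s ∈ S, ∀ r ∈ R, s - r ∉ Q) :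
    ∃ c, c ∈ cosetSet Q S R := by
  rcases S.eq_empty_or_nonempty with rfl | ⟨s, hs⟩
  · obtain ⟨c, hc⟩ := exists_forall_sub_notMem hQ hR
    exact ⟨c, by simp, hc⟩
  · exact ⟨s, fun s' hs' => hSS s hs s' hs', fun r hr => hSR s hs r hr⟩

lemma mem_cosetSet_of_sub_mem {S R : Set V} {c y : V} (hc : c ∈ cosetSet Q S R)
    (hy : y - c ∈ Q) : y ∈ cosetSet Q S R := by
  refine ⟨fun s hs => by simpa using Q.add_mem hy (hc.1 s hs), fun r hr hyr => hc.2 r hr ?_⟩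
  simpa using Q.sub_mem hyr hy

lemma cosetSet_eq_cosetUnion {S R : Set V} {c : V} (hc : c ∈ cosetSet Q S R)
    (hS : S.Nonempty) : cosetSet Q S R = cosetUnion V Q {c} := by
  obtain ⟨s, hs⟩ := hS
  ext y
  simp only [cosetUnion, Finset.mem_singleton, iUnion_iUnion_eq_left]
  refine ⟨fun hy => ?_, mem_cosetSet_of_sub_mem hc⟩
  simpa using Q.sub_mem (hy.1 s hs) (hc.1 s hs)

lemma cosetSet_empty_left {R : Set V} (hR : R.Finite) :
    cosetSet Q ∅ R = (cosetUnion V Q hR.toFinset)ᶜ := by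
  ext y
  simp [cosetSet, cosetUnion]

end Cosets

section DenseSubspace

variable {K V : Type} [Field K] [AddCommGroup V] [LinearOrder V] [Module K V]

structure IsDenseProper (Q : Submodule K V) : Prop where
  ne_top : Q ≠ ⊤
  exists_mem_between : ∀ a b : V, a < b → ∃ q ∈ Q, a < q ∧ q < b

namespace IsDenseProper

variable {Q : Submodule K V} (hQ : IsDenseProper Q)
include hQ

lemma nontrivial : Nontrivial V := by
  by_contra h
  rw [not_nontrivial_iff_subsingleton] at h
  exact hQ.ne_top (eq_top_iff.2 fun x _ => by simp [Subsingleton.elim x 0])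

lemma denselyOrdered : DenselyOrdered V :=
  ⟨fun a b hab => by
    obtain ⟨q, -, hq⟩ := hQ.exists_mem_between a b hab
    exact ⟨q, hq⟩⟩

variable [IsOrderedAddMonoid V]

lemma exists_between_sub_mem (c : V) {a b : V} (hab : a < b) :
    ∃ y, a < y ∧ y < b ∧ y - c ∈ Q := by
  obtain ⟨q, hq, h₁, h₂⟩ := hQ.exists_mem_between (a - c) (b - c) (sub_lt_sub_right hab c)
  exact ⟨q + c, sub_lt_iff_lt_add.1 h₁, lt_sub_iff_add_lt.1 h₂, by simpa using hq⟩

lemma exists_toExt_between {a b : WithBot (WithTop V)} (hab : a < b) :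
    ∃ v, a < toExt V v ∧ toExt V v < b := by
  have := hQ.nontrivial
  have := hQ.denselyOrdered
  obtain ⟨z, haz, hzb⟩ := exists_between hab
  obtain ⟨v, rfl⟩ := exists_toExt_eq haz.ne_bot hzb.ne_top
  exact ⟨v, haz, hzb⟩

lemma exists_mem_extIoo_sub_mem (c : V) {a b : WithBot (WithTop V)} (hab : a < b) :
    ∃ y ∈ extIoo V a b, y - c ∈ Q := by
  obtain ⟨p, hap, hpb⟩ := hQ.exists_toExt_between hab
  obtain ⟨q, hpq, hqb⟩ := hQ.exists_toExt_between hpb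
  obtain ⟨y, hpy, hyq, hy⟩ := hQ.exists_between_sub_mem c (toExt_lt_toExt.1 hpq)
  exact ⟨y, ⟨hap.trans (toExt_lt_toExt.2 hpy), (toExt_lt_toExt.2 hyq).trans hqb⟩, hy⟩

end IsDenseProper

end DenseSubspace

/-- What two constraints `(k, b)`, `(k', b')` on the same `y` force on `b - b'`. Other pairs never
conflict, because the cosets of `Q` are dense and there are infinitely many of them. -/
def Cond.pair : Cond → Cond → List Cond
  | .pos, .neg => [.neg]
  | .mem, .mem => [.mem]
  | .mem, .nmem => [.nmem]
  | _, _ => []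

section Solutions

variable {K V : Type} [Field K] [AddCommGroup V] [LinearOrder V] [IsOrderedAddMonoid V]
  [Module K V] {Q : Submodule K V} {cs : List (Cond × V)}

lemma holds_pair_of_mem_solSet {y : V} (hy : y ∈ solSet Q cs) {c c' : Cond × V} (hc : c ∈ cs)
    (hc' : c' ∈ cs) {k : Cond} (hk : k ∈ c.1.pair c'.1) : k.Holds Q (c.2 - c'.2) := by
  obtain ⟨k₁, b₁⟩ := c
  obtain ⟨k₂, b₂⟩ := c'
  have h₁ := hy _ hc
  have h₂ := hy _ hc'
  cases k₁ <;> cases k₂ <;>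
    simp only [Cond.pair, List.mem_cons, List.not_mem_nil, or_false] at hk <;>
    subst hk <;> simp only [Cond.Holds, SetLike.mem_coe] at h₁ h₂ ⊢
  · exact sub_neg.2 ((sub_pos.1 h₁).trans (sub_neg.1 h₂))
  · simpa using Q.sub_mem h₂ h₁
  · exact fun h => h₂ (by simpa using Q.add_mem h₁ h)

lemma solSet_nonempty_iff [Infinite K] (hQ : IsDenseProper Q) (hcs : ∀ c ∈ cs, c.1 ≠ .zero) :
    (solSet Q cs).Nonempty ↔ ∀ c ∈ cs, ∀ c' ∈ cs, ∀ k ∈ c.1.pair c'.1, k.Holds Q (c.2 - c'.2) := by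
  refine ⟨fun ⟨y, hy⟩ c hc c' hc' k hk => holds_pair_of_mem_solSet hy hc hc' hk, fun h => ?_⟩
  obtain ⟨a, b, hab_eq, hab⟩ := exists_extIoo_eq (finite_boundSet cs .pos) (finite_boundSet cs .neg)
  have hlt : a < b :=
    hab fun l hl u hu => sub_neg.1 (h (.pos, l) hl (.neg, u) hu .neg (by simp [Cond.pair]))
  obtain ⟨c, hc⟩ := exists_mem_cosetSet (S := boundSet cs .mem) hQ.ne_top
    (finite_boundSet cs .nmem)
    (fun s hs s' hs' => h (.mem, s) hs (.mem, s') hs' .mem (by simp [Cond.pair]))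
    (fun s hs r hr => h (.mem, s) hs (.nmem, r) hr .nmem (by simp [Cond.pair]))
  obtain ⟨y, hy, hyc⟩ := hQ.exists_mem_extIoo_sub_mem c hlt
  refine ⟨y, ?_⟩
  rw [solSet_eq_inter hcs, ← hab_eq]
  exact ⟨hy, mem_cosetSet_of_sub_mem hc hyc⟩

lemma exists_ne_mem_solSet (hQ : IsDenseProper Q) (hcs : ∀ c ∈ cs, c.1 ≠ .zero) {y : V}
    (hy : y ∈ solSet Q cs) : ∃ y' ∈ solSet Q cs, y' ≠ y := by
  obtain ⟨a, b, hab_eq, -⟩ := exists_extIoo_eq (finite_boundSet cs .pos) (finite_boundSet cs .neg)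
  rw [solSet_eq_inter hcs, ← hab_eq] at hy ⊢
  obtain ⟨y', hy', hy'y⟩ := hQ.exists_mem_extIoo_sub_mem y hy.1.2
  exact ⟨y', ⟨⟨hy.1.1.trans hy'.1, hy'.2⟩, mem_cosetSet_of_sub_mem hy.2 hy'y⟩,
    (toExt_lt_toExt.1 hy'.1).ne'⟩

lemma nearInterval_solSet (hcs : ∀ c ∈ cs, c.1 ≠ .zero) (hne : (solSet Q cs).Nonempty) :
    NearInterval V Q (solSet Q cs) := by
  obtain ⟨a, b, hab_eq, -⟩ := exists_extIoo_eq (finite_boundSet cs .pos) (finite_boundSet cs .neg)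
  have heq := solSet_eq_inter (Q := (Q : Set V)) hcs
  rw [← hab_eq] at heq
  obtain ⟨y, hy⟩ := hne
  have hy' := heq ▸ hy
  refine ⟨⟨y, hy⟩, a, b, ?_⟩
  rcases (boundSet cs .mem).eq_empty_or_nonempty with hS | hS
  · refine ⟨(finite_boundSet cs .nmem).toFinset, hy'.1.1.trans hy'.1.2, Or.inr ?_⟩
    rw [heq, hS, cosetSet_empty_left (finite_boundSet cs .nmem), sdiff_eq]
  · exact ⟨{y}, hy'.1.1.trans hy'.1.2, Or.inl (by rw [heq, cosetSet_eq_cosetUnion hy'.2 hS])⟩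

end Solutions

section Projection

variable {K V : Type} [Field K] [AddCommGroup V] [Module K V] {γ : Type} [Fintype γ]

def evalBounds (x : γ → V) (bs : List (Cond × ((γ → K) × V))) : List (Cond × V) :=
  bs.map fun c => (c.1, affEval x c.2)

lemma mem_evalBounds_of_mem (x : γ → V) {bs : List (Cond × ((γ → K) × V))} {k : Cond}
    {b : (γ → K) × V} (hb : (k, b) ∈ bs) : (k, affEval x b) ∈ evalBounds x bs :=
  List.mem_map_of_mem hb

lemma ne_zero_of_mem_evalBounds {x : γ → V} {bs : List (Cond × ((γ → K) × V))}
    (hbs : ¬∃ b, (Cond.zero, b) ∈ bs) : ∀ c ∈ evalBounds x bs, c.1 ≠ .zero := by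
  simp only [evalBounds, List.mem_map]
  rintro _ ⟨⟨k, b⟩, hb, rfl⟩ rfl
  exact hbs ⟨b, hb⟩

variable [LinearOrder V] {Q : Submodule K V}

lemma mem_solSet_evalBounds {x : γ → V} {bs : List (Cond × ((γ → K) × V))} {y : V} :
    y ∈ solSet Q (evalBounds x bs) ↔ ∀ c ∈ bs, c.1.Holds Q (y - affEval x c.2) :=
  List.forall_mem_map

def Cond.swap : Cond → Cond
  | .pos => .neg
  | .neg => .pos
  | k => k

variable [IsOrderedAddMonoid V]

lemma Cond.holds_neg (k : Cond) (z : V) : k.Holds Q (-z) ↔ k.swap.Holds Q z := by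
  cases k <;> simp [Holds, swap, Left.neg_pos_iff, Q.neg_mem_iff]

variable [LinearOrder K] [IsStrictOrderedRing K] [PosSMulStrictMono K V]

def Cond.scale (a : K) (k : Cond) : Cond := if 0 < a then k else k.swap

lemma Cond.holds_smul {a : K} (ha : a ≠ 0) (k : Cond) (z : V) :
    k.Holds Q (a • z) ↔ (k.scale a).Holds Q z := by
  have hpos {a : K} (ha : 0 < a) (z : V) : k.Holds Q (a • z) ↔ k.Holds Q z := by
    cases k <;> simp [Holds, smul_pos_iff_of_pos_left ha, smul_neg_iff_of_pos_left ha,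
      Q.smul_mem_iff ha.ne', ha.ne']
  rcases ha.lt_or_gt with ha | ha
  · rw [scale, if_neg ha.not_gt, ← holds_neg, ← neg_smul_neg, hpos (neg_pos.2 ha)]
  · rw [scale, if_pos ha, hpos ha]

/-- Since `α • y + t = α • (y - b)` for `b = -α⁻¹ • t`, a literal whose coefficient `α` at `y` is
nonzero becomes a condition on `y - b`. -/
def Literal.split (L : Literal K V (γ ⊕ Fin 1)) : Literal K V γ ⊕ (Cond × ((γ → K) × V)) :=
  if L.2.1 (.inr 0) = 0 then .inl (L.1, (L.2.1 ∘ .inl, L.2.2))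
  else .inr (L.1.scale (L.2.1 (.inr 0)), -(L.2.1 (.inr 0))⁻¹ • (L.2.1 ∘ .inl, L.2.2))

lemma Literal.holds_iff_split (L : Literal K V (γ ⊕ Fin 1)) (x : γ → V) (y : V) :
    L.1.Holds Q (affEval (Sum.elim x fun _ => y) L.2) ↔
      L.split.elim (fun L' => L'.1.Holds Q (affEval x L'.2))
        (fun c => c.1.Holds Q (y - affEval x c.2)) := by
  unfold split
  split_ifs with hα
  · rw [Sum.elim_inl, affEval_sumElim, hα, zero_smul, zero_add]
  · rw [Sum.elim_inr, ← Cond.holds_smul hα, affEval_sumElim, map_smul, smul_sub, smul_smul,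
      mul_neg, mul_inv_cancel₀ hα, neg_smul, one_smul, sub_neg_eq_add]

def freeLits (ls : List (Literal K V (γ ⊕ Fin 1))) : List (Literal K V γ) :=
  ls.filterMap fun L => L.split.getLeft?

def boundLits (ls : List (Literal K V (γ ⊕ Fin 1))) : List (Cond × ((γ → K) × V)) :=
  ls.filterMap fun L => L.split.getRight?

lemma sumElim_mem_cellSet_iff {ls : List (Literal K V (γ ⊕ Fin 1))} {x : γ → V} {y : V} :
    Sum.elim x (fun _ => y) ∈ cellSet Q ls ↔
      x ∈ cellSet Q (freeLits ls) ∧ y ∈ solSet Q (evalBounds x (boundLits ls)) := by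
  simp only [cellSet, mem_solSet_evalBounds, freeLits, boundLits,
    List.mem_filterMap, Sum.getLeft?_eq_some_iff, Sum.getRight?_eq_some_iff]
  constructor
  · intro h
    refine ⟨fun L' ⟨L, hL, hs⟩ => ?_, fun c ⟨L, hL, hs⟩ => ?_⟩ <;>
      simpa [Literal.holds_iff_split, hs] using h L hL
  · rintro ⟨hfree, hbound⟩ L hL
    rw [Literal.holds_iff_split]
    cases hs : L.split with
    | inl L' => exact hfree L' ⟨L, hL, hs⟩
    | inr c => exact hbound c ⟨L, hL, hs⟩

end Projection

section QuantifierElimination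

variable {K V : Type} [Field K] [AddCommGroup V] [LinearOrder V] [Module K V]
  {Q : Submodule K V} {γ : Type} [Fintype γ]

def substLits (b : (γ → K) × V) (bs : List (Cond × ((γ → K) × V))) : List (Literal K V γ) :=
  bs.map fun c => (c.1, b - c.2)

def pairLits (bs : List (Cond × ((γ → K) × V))) : List (Literal K V γ) :=
  bs.flatMap fun c => bs.flatMap fun c' => (c.1.pair c'.1).map fun k => (k, c.2 - c'.2)

lemma mem_cellSet_substLits {b : (γ → K) × V} {bs : List (Cond × ((γ → K) × V))} {x : γ → V} :
    x ∈ cellSet Q (substLits b bs) ↔ affEval x b ∈ solSet Q (evalBounds x bs) := by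
  simp only [cellSet, substLits, mem_ofPred_eq, List.forall_mem_map, mem_solSet_evalBounds,
    map_sub]

lemma mem_cellSet_pairLits {bs : List (Cond × ((γ → K) × V))} {x : γ → V} :
    x ∈ cellSet Q (pairLits bs) ↔ ∀ c ∈ evalBounds x bs, ∀ c' ∈ evalBounds x bs,
      ∀ k ∈ c.1.pair c'.1, k.Holds Q (c.2 - c'.2) := by
  simp only [cellSet, pairLits, evalBounds, mem_ofPred_eq, List.forall_mem_flatMap,
    List.forall_mem_map, map_sub]

variable [LinearOrder K] [IsStrictOrderedRing K] [IsOrderedAddMonoid V] [PosSMulStrictMono K V]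

theorem IsDenseProper.isQF_exists_sumElim_mem_cellSet (hQ : IsDenseProper Q)
    (ls : List (Literal K V (γ ⊕ Fin 1))) :
    IsQF K Q {x : γ → V | ∃ y, Sum.elim x (fun _ => y) ∈ cellSet Q ls} := by
  by_cases hz : ∃ b, (Cond.zero, b) ∈ boundLits ls
  · obtain ⟨b, hb⟩ := hz
    convert isQF_cellSet (K := K) (Q := (Q : Set V)) (freeLits ls ++ substLits b (boundLits ls))
      using 1
    ext x
    simp only [mem_ofPred_eq, sumElim_mem_cellSet_iff, cellSet_append, mem_inter_iff,
      mem_cellSet_substLits]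
    refine ⟨fun ⟨y, hx, hy⟩ => ?_, fun ⟨hx, hb⟩ => ⟨_, hx, hb⟩⟩
    obtain rfl : y = affEval x b := solSet_subset_singleton (mem_evalBounds_of_mem x hb) hy
    exact ⟨hx, hy⟩
  · convert isQF_cellSet (K := K) (Q := (Q : Set V)) (freeLits ls ++ pairLits (boundLits ls))
      using 1
    ext x
    simp only [mem_ofPred_eq, sumElim_mem_cellSet_iff, cellSet_append, mem_inter_iff,
      mem_cellSet_pairLits, ← solSet_nonempty_iff hQ (ne_zero_of_mem_evalBounds hz)]
    exact ⟨fun ⟨y, hx, hy⟩ => ⟨hx, y, hy⟩, fun ⟨hx, y, hy⟩ => ⟨y, hx, hy⟩⟩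

theorem IsQF.exists_sumElim (hQ : IsDenseProper Q) {S : Set (γ ⊕ Fin 1 → V)}
    (hS : IsQF K Q S) : IsQF K Q {x : γ → V | ∃ y, Sum.elim x (fun _ => y) ∈ S} := by
  obtain ⟨lss, rfl⟩ := hS
  convert IsQF.biUnion lss fun ls _ => hQ.isQF_exists_sumElim_mem_cellSet ls using 1
  ext x
  simp only [mem_ofPred_eq, mem_iUnion, exists_prop]
  exact ⟨fun ⟨y, ls, hls, h⟩ => ⟨ls, hls, y, h⟩, fun ⟨ls, hls, y, h⟩ => ⟨y, ls, hls, h⟩⟩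

end QuantifierElimination

section Formulas

def snocEquiv (α : Type) (n : ℕ) : α ⊕ Fin (n + 1) ≃ (α ⊕ Fin n) ⊕ Fin 1 :=
  ((Equiv.refl α).sumCongr finSumFinEquiv.symm).trans (Equiv.sumAssoc α (Fin n) (Fin 1)).symm

lemma sumElim_comp_snocEquiv {V α : Type} {n : ℕ} (p : α ⊕ Fin n → V) (y : V) :
    Sum.elim p (fun _ => y) ∘ snocEquiv α n =
      Sum.elim (p ∘ Sum.inl) (Fin.snoc (p ∘ Sum.inr) y) := by
  funext i
  rcases i with a | i
  · rfl
  · refine Fin.lastCases ?_ (fun j => ?_) i <;> simp [snocEquiv]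

variable {K V : Type} [Field K] [AddCommGroup V] [LinearOrder V] [Module K V]

lemma exists_affEval_eq_realize (one : V) (Q : Set V) {β : Type} [Fintype β]
    (t : ((LP K)[[(univ : Set V)]]).Term β) :
    ∃ a : (β → K) × V, ∀ x, (letI := LPStruc K V one Q; t.realize x) = affEval x a := by
  classical
  induction t with
  | var i => exact ⟨(Pi.single i 1, 0), fun x => by simp [affEval_apply, Pi.single_apply]⟩
  | func f ts ih =>
    choose a ha using ih
    rcases f with f | c
    · cases f with
      | add => exact ⟨a 0 + a 1, fun x => by rw [map_add, ← ha 0, ← ha 1]; rfl⟩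
      | neg => exact ⟨-a 0, fun x => by rw [map_neg, ← ha 0]; rfl⟩
      | zero => exact ⟨0, fun x => by rw [map_zero]; rfl⟩
      | one => exact ⟨(0, one), fun x => by simp [affEval_apply]; rfl⟩
      | smul r => exact ⟨r • a 0, fun x => by rw [map_smul, ← ha 0]; rfl⟩
    · rename_i l
      cases l with
      | zero => exact ⟨(0, c.1), fun x => by simp [affEval_apply]; rfl⟩
      | succ n => exact isEmptyElim c

variable [LinearOrder K] [IsStrictOrderedRing K] [IsOrderedAddMonoid V] [PosSMulStrictMono K V]
  {Q : Submodule K V}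

theorem IsDenseProper.isQF_realize (hQ : IsDenseProper Q) (one : V) {α : Type} [Fintype α]
    {n : ℕ} (φ : ((LP K)[[(univ : Set V)]]).BoundedFormula α n) :
    IsQF K Q {p : α ⊕ Fin n → V |
      letI := LPStruc K V one Q; φ.Realize (p ∘ Sum.inl) (p ∘ Sum.inr)} := by
  induction φ with
  | falsum => simpa [BoundedFormula.Realize] using isQF_empty
  | equal t₁ t₂ =>
    obtain ⟨a₁, h₁⟩ := exists_affEval_eq_realize one (Q : Set V) t₁
    obtain ⟨a₂, h₂⟩ := exists_affEval_eq_realize one (Q : Set V) t₂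
    convert isQF_cellSet (K := K) (Q := (Q : Set V)) [(.zero, a₁ - a₂)] using 1
    ext p
    simp [cellSet, Cond.Holds, BoundedFormula.Realize, h₁, h₂, sub_eq_zero]
  | rel R ts =>
    rcases R with R | R
    · cases R with
      | lt =>
        obtain ⟨a₀, h₀⟩ := exists_affEval_eq_realize one (Q : Set V) (ts 0)
        obtain ⟨a₁, h₁⟩ := exists_affEval_eq_realize one (Q : Set V) (ts 1)
        convert isQF_cellSet (K := K) (Q := (Q : Set V)) [(.pos, a₁ - a₀)] using 1
        ext p
        simp only [cellSet, List.mem_singleton, forall_eq, Cond.Holds, map_sub, sub_pos, ← h₀, ← h₁,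
          mem_ofPred_eq, BoundedFormula.Realize, Sum.elim_comp_inl_inr]
        rfl
      | q =>
        obtain ⟨a₀, h₀⟩ := exists_affEval_eq_realize one (Q : Set V) (ts 0)
        convert isQF_cellSet (K := K) (Q := (Q : Set V)) [(.mem, a₀)] using 1
        ext p
        simp only [cellSet, List.mem_singleton, forall_eq, Cond.Holds, ← h₀,
          mem_ofPred_eq, BoundedFormula.Realize, Sum.elim_comp_inl_inr]
        rfl
    · exact isEmptyElim R
  | imp φ ψ ihφ ihψ =>
    convert ihφ.compl.union ihψ using 1
    ext p
    simp [BoundedFormula.Realize, imp_iff_not_or]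
  | all φ ih =>
    convert ((ih.preimage_comp_equiv (snocEquiv α _)).compl.exists_sumElim hQ).compl using 1
    ext p
    simp only [mem_ofPred_eq, mem_compl_iff, mem_preimage, sumElim_comp_snocEquiv,
      Sum.elim_comp_inl, Sum.elim_comp_inr, not_exists, not_not, BoundedFormula.realize_all]

theorem IsDenseProper.isQF_of_definable (hQ : IsDenseProper Q) (one : V) {α : Type} [Fintype α]
    {S : Set (α → V)} (hS : letI := LPStruc K V one Q; Set.Definable univ (LP K) S) :
    IsQF K Q S := by
  obtain ⟨φ, rfl⟩ := hS
  convert (hQ.isQF_realize one φ).preimage_comp_equiv (Equiv.sumEmpty α (Fin 0)) using 1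
  ext x
  simp only [mem_ofPred_eq, mem_preimage, Formula.Realize]
  rw [Subsingleton.elim default ((x ∘ Equiv.sumEmpty α (Fin 0)) ∘ Sum.inr)]
  rfl

end Formulas

section Definability

variable {K V : Type} [Field K] [AddCommGroup V] [LinearOrder V] [Module K V]

noncomputable def affTerm {α : Type} [Fintype α] (a : (α → K) × V) :
    ((LP K)[[(univ : Set V)]]).Term (α ⊕ Fin 0) :=
  (Finset.univ.toList.map fun i =>
      Functions.apply₁ (Sum.inl (LPFunc.smul (a.1 i)) : ((LP K)[[(univ : Set V)]]).Functions 1)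
        (var (Sum.inl i))).foldr
    (Functions.apply₂ (Sum.inl LPFunc.add : ((LP K)[[(univ : Set V)]]).Functions 2))
    ((LP K).con ⟨a.2, mem_univ _⟩).term

lemma realize_affTerm (one : V) (Q : Set V) {α : Type} [Fintype α] (a : (α → K) × V)
    (x : α → V) (xs : Fin 0 → V) :
    (letI := LPStruc K V one Q; (affTerm a).realize (Sum.elim x xs)) = affEval x a := by
  let _ := LPStruc K V one Q
  have hfold (l : List α) :
      ((l.map fun i =>
          Functions.apply₁ (Sum.inl (LPFunc.smul (a.1 i)) : ((LP K)[[(univ : Set V)]]).Functions 1)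
            (var (Sum.inl i))).foldr
        (Functions.apply₂ (Sum.inl LPFunc.add : ((LP K)[[(univ : Set V)]]).Functions 2))
        ((LP K).con ⟨a.2, mem_univ _⟩).term).realize (Sum.elim x xs) =
        (l.map fun i => a.1 i • x i).sum + a.2 := by
    induction l with
    | nil => simp
    | cons i l ih =>
      rw [List.map_cons, List.foldr_cons, List.map_cons, List.sum_cons, add_assoc, ← ih]
      rfl
  rw [affTerm, hfold, Finset.sum_map_toList]
  rfl

lemma definable_setOf_holds (one : V) (Q : Set V) {α : Type} [Fintype α] (k : Cond)
    (a : (α → K) × V) :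
    letI := LPStruc K V one Q
    Set.Definable univ (LP K) {x : α → V | k.Holds Q (affEval x a)} := by
  let _ := LPStruc K V one Q
  let zero : ((LP K)[[(univ : Set V)]]).Term (α ⊕ Fin 0) := ((LP K).con ⟨0, mem_univ _⟩).term
  have hmem : Set.Definable univ (LP K) {x : α → V | affEval x a ∈ Q} := by
    refine ⟨Relations.boundedFormula₁
      (Sum.inl LPRel.q : ((LP K)[[(univ : Set V)]]).Relations 1) (affTerm a), ?_⟩
    ext x
    rw [mem_ofPred_eq, ← realize_affTerm one Q a x default]
    rfl
  cases k
  · refine ⟨(affTerm a).bdEqual zero, ?_⟩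
    ext x
    rw [mem_ofPred_eq, ← realize_affTerm one Q a x default]
    rfl
  · refine ⟨Relations.boundedFormula₂
      (Sum.inl LPRel.lt : ((LP K)[[(univ : Set V)]]).Relations 2) zero (affTerm a), ?_⟩
    ext x
    rw [mem_ofPred_eq, ← realize_affTerm one Q a x default]
    rfl
  · refine ⟨Relations.boundedFormula₂
      (Sum.inl LPRel.lt : ((LP K)[[(univ : Set V)]]).Relations 2) (affTerm a) zero, ?_⟩
    ext x
    rw [mem_ofPred_eq, ← realize_affTerm one Q a x default]
    rfl
  · exact hmem
  · exact hmem.compl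

theorem IsQF.definable (one : V) {Q : Set V} {α : Type} [Fintype α] {S : Set (α → V)}
    (hS : IsQF K Q S) :
    letI := LPStruc K V one Q
    Set.Definable univ (LP K) S := by
  classical
  let _ := LPStruc K V one Q
  obtain ⟨lss, rfl⟩ := hS
  have hcell (ls : List (Literal K V α)) :
      cellSet Q ls = ⋂ L ∈ ls.toFinset, {x | L.1.Holds Q (affEval x L.2)} := by
    ext; simp [cellSet]
  rw [show ⋃ ls ∈ lss, cellSet Q ls = ⋃ ls ∈ lss.toFinset, cellSet Q ls by simp]
  refine definable_biUnion_finset (fun ls => ?_) _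
  rw [hcell]
  exact definable_biInter_finset (fun L : Literal K V α => definable_setOf_holds one Q L.1 L.2) _

end Definability

lemma iUnion_get_eq_biUnion {α ι : Type*} (l : List ι) (f : ι → Set α) :
    ⋃ j : Fin l.length, f (l.get j) = ⋃ i ∈ l, f i := by
  ext y
  simp only [mem_iUnion, exists_prop, List.mem_iff_get]
  exact ⟨fun ⟨j, h⟩ => ⟨_, ⟨j, rfl⟩, h⟩, fun ⟨_, ⟨j, hj⟩, h⟩ => ⟨j, hj ▸ h⟩⟩

lemma exists_finset_union_iUnion_of_subsingleton_or {α ι : Type*} (l : List ι) (C : ι → Set α)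
    (P : Set α → Prop) (h : ∀ i ∈ l, (C i).Subsingleton ∨ P (C i)) :
    ∃ (X : Finset α) (m : ℕ) (W : Fin m → Set α),
      (∀ j, P (W j)) ∧ ⋃ i ∈ l, C i = ↑X ∪ ⋃ j, W j := by
  classical
  have hfin : (⋃ i ∈ l.filter fun i => (C i).Subsingleton, C i).Finite :=
    (List.finite_toSet _).biUnion fun i hi => by
      simp only [List.mem_filter, decide_eq_true_eq] at hi
      exact hi.2.finite
  set l' := l.filter fun i => ¬ (C i).Subsingleton
  refine ⟨hfin.toFinset, l'.length, fun j => C (l'.get j), fun j => ?_, ?_⟩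
  · have hj := List.get_mem l' j
    simp only [l', List.mem_filter, decide_eq_true_eq] at hj
    exact (h _ hj.1).resolve_left hj.2
  · rw [hfin.coe_toFinset, iUnion_get_eq_biUnion]
    ext y
    simp only [mem_union, mem_iUnion, exists_prop, l', List.mem_filter, decide_eq_true_eq]
    grind

section OneVariable

variable {K V : Type} [Field K] [LinearOrder K] [IsStrictOrderedRing K]
  [AddCommGroup V] [LinearOrder V] [IsOrderedAddMonoid V] [Module K V] [PosSMulStrictMono K V]
  {Q : Submodule K V}

lemma subsingleton_or_nearInterval_fiber {γ : Type} [Fintype γ]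
    (ls : List (Literal K V (γ ⊕ Fin 1))) (x : γ → V) :
    {y | Sum.elim x (fun _ => y) ∈ cellSet Q ls}.Subsingleton ∨
      NearInterval V Q {y | Sum.elim x (fun _ => y) ∈ cellSet Q ls} := by
  by_cases hx : x ∈ cellSet Q (freeLits ls)
  · have heq : {y | Sum.elim x (fun _ => y) ∈ cellSet Q ls} =
        solSet Q (evalBounds x (boundLits ls)) := by
      ext y
      simp [sumElim_mem_cellSet_iff, hx]
    rw [heq]
    by_cases hz : ∀ c ∈ evalBounds x (boundLits ls), c.1 ≠ .zero
    · rcases (solSet (Q : Set V) (evalBounds x (boundLits ls))).eq_empty_or_nonempty with h | h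
      · exact Or.inl (h ▸ subsingleton_empty)
      · exact Or.inr (nearInterval_solSet hz h)
    · simp only [not_forall, not_not] at hz
      obtain ⟨⟨k, b⟩, hc, rfl⟩ := hz
      exact Or.inl (subsingleton_singleton.anti (solSet_subset_singleton hc))
  · refine Or.inl (subsingleton_empty.anti fun y hy => hx ?_)
    exact (sumElim_mem_cellSet_iff.1 hy).1

theorem IsQF1.exists_finset_nearInterval {T : Set V} (hT : IsQF1 K Q T) :
    ∃ (X : Finset V) (m : ℕ) (W : Fin m → Set V),
      (∀ j, NearInterval V Q (W j) ∧ IsQF1 K Q (W j)) ∧ T = ↑X ∪ ⋃ j, W j := by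
  -- cells of `T` are fibres over the empty tuple once `T` is read in the variables `Fin 0 ⊕ Fin 1`
  let e : Fin 0 ⊕ Fin 1 ≃ Fin 1 := Equiv.emptySum _ _
  have he (p : Fin 0 ⊕ Fin 1 → V) : Sum.elim Fin.elim0 (fun _ => p (.inr 0)) = p := by
    funext i
    rcases i with i | i
    · exact i.elim0
    · rw [Fin.fin_one_eq_zero i]; rfl
  obtain ⟨lss, hlss⟩ := hT.preimage_comp_equiv e.symm
  have hT : T = ⋃ ls ∈ lss, {y | Sum.elim Fin.elim0 (fun _ => y) ∈ cellSet Q ls} := by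
    ext y
    have := congrArg (Sum.elim Fin.elim0 (fun _ => y) ∈ ·) hlss
    simpa [e, Equiv.emptySum] using this
  rw [hT]
  refine exists_finset_union_iUnion_of_subsingleton_or lss
    (fun ls => {y | Sum.elim Fin.elim0 (fun _ => y) ∈ cellSet Q ls})
    (fun W => NearInterval V Q W ∧ IsQF1 K Q W) fun ls _ =>
    (subsingleton_or_nearInterval_fiber ls _).imp_right fun h => ⟨h, ?_⟩
  have hcell := (isQF_cellSet (K := K) (Q := (Q : Set V)) ls).preimage_comp_equiv e
  unfold IsQF1
  convert hcell using 2
  ext x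
  simp only [mem_preimage, mem_ofPred_eq]
  congr!
  exact he (x ∘ e)

end OneVariable

section Decomposition

variable {K V : Type} [Field K] [LinearOrder K] [IsStrictOrderedRing K]
  [AddCommGroup V] [LinearOrder V] [IsOrderedAddMonoid V] [Module K V] [PosSMulStrictMono K V]
  {Q : Submodule K V}

theorem IsDenseProper.exists_affine_of_cellSet_subset_graph (hQ : IsDenseProper Q) {f : V → V}
    {ls : List (Literal K V (Fin 1 ⊕ Fin 1))}
    (hls : ∀ x y, Sum.elim (fun _ : Fin 1 => x) (fun _ => y) ∈ cellSet Q ls → f x = y) :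
    ∃ (α : K) (c : V), ∀ x y, Sum.elim (fun _ : Fin 1 => x) (fun _ => y) ∈ cellSet Q ls →
      f x = α • x + c := by
  by_cases hz : ∃ b, (Cond.zero, b) ∈ boundLits ls
  · obtain ⟨b, hb⟩ := hz
    refine ⟨b.1 0, b.2, fun x y hxy => ?_⟩
    have hy := (sumElim_mem_cellSet_iff.1 hxy).2
    rw [hls x y hxy, solSet_subset_singleton (mem_evalBounds_of_mem _ hb) hy]
    simp [affEval_apply]
  · -- without an equation, a nonempty fibre of the cell has two points, but it lies in a graph
    refine ⟨0, 0, fun x y hxy => ?_⟩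
    rw [sumElim_mem_cellSet_iff] at hxy
    obtain ⟨y', hy', hne⟩ := exists_ne_mem_solSet hQ (ne_zero_of_mem_evalBounds hz) hxy.2
    have hfy' := hls x y' (sumElim_mem_cellSet_iff.2 ⟨hxy.1, hy'⟩)
    exact absurd (hfy'.symm.trans (hls x y (sumElim_mem_cellSet_iff.2 hxy))) hne

theorem IsDenseProper.exists_affine_cover (hQ : IsDenseProper Q) {S : Set V} {f : V → V}
    (hG : IsQF K Q {p : Fin 1 ⊕ Fin 1 → V | p (.inl 0) ∈ S ∧ f (p (.inl 0)) = p (.inr 0)}) :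
    ∃ (k : ℕ) (W : Fin k → Set V), (∀ i, IsQF1 K Q (W i)) ∧ S = ⋃ i, W i ∧
      ∀ i, ∃ (α : K) (c : V), ∀ x ∈ W i, f x = α • x + c := by
  obtain ⟨lss, hlss⟩ := hG
  have hgraph (x y : V) : (x ∈ S ∧ f x = y) ↔
      ∃ ls ∈ lss, Sum.elim (fun _ : Fin 1 => x) (fun _ => y) ∈ cellSet Q ls := by
    simpa using congrArg (Sum.elim (fun _ : Fin 1 => x) (fun _ => y) ∈ ·) hlss
  let W (ls : List (Literal K V (Fin 1 ⊕ Fin 1))) : Set V :=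
    {x | ∃ y, Sum.elim (fun _ : Fin 1 => x) (fun _ => y) ∈ cellSet Q ls}
  refine ⟨lss.length, fun j => W (lss.get j), fun j => ?_, ?_, fun j => ?_⟩
  · unfold IsQF1
    convert hQ.isQF_exists_sumElim_mem_cellSet (lss.get j) using 2
    ext x
    simp only [mem_preimage, W, mem_ofPred_eq]
    rw [show (fun _ : Fin 1 => x 0) = x from funext fun i => congrArg x (Subsingleton.elim 0 i)]
  · rw [iUnion_get_eq_biUnion]
    ext x
    simp only [mem_iUnion, exists_prop, W, mem_ofPred_eq]
    refine ⟨fun hx => ?_, fun ⟨ls, hls, y, hy⟩ => ((hgraph x y).2 ⟨ls, hls, hy⟩).1⟩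
    obtain ⟨ls, hls, hy⟩ := (hgraph x (f x)).1 ⟨hx, rfl⟩
    exact ⟨ls, hls, f x, hy⟩
  · obtain ⟨α, c, h⟩ := hQ.exists_affine_of_cellSet_subset_graph
      fun x y hxy => ((hgraph x y).2 ⟨_, List.get_mem lss j, hxy⟩).2
    exact ⟨α, c, fun x ⟨y, hy⟩ => h x y hy⟩

theorem exists_decomposition_of_affine_cover {S : Set V} {f : V → V} {k : ℕ}
    {W : Fin k → Set V} (hW : ∀ i, IsQF1 K Q (W i)) (hSW : S = ⋃ i, W i)
    (hf : ∀ i, ∃ (α : K) (c : V), ∀ x ∈ W i, f x = α • x + c) :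
    ∃ (X : Finset V) (U : Fin k → Set V),
      (X : Set V) ⊆ S ∧
      (∀ ℓ, IsQF1 K Q (U ℓ)) ∧
      (Pairwise fun i j => Disjoint (U i) (U j)) ∧
      (∀ ℓ, ∃ (m : ℕ) (N : Fin m → Set V), (∀ i, NearInterval V Q (N i)) ∧ U ℓ = ⋃ i, N i) ∧
      S = (X : Set V) ∪ ⋃ ℓ, U ℓ ∧
      (∀ ℓ, ∃ (α : K) (c : V), ∀ x ∈ U ℓ, f x = α • x + c) := by
  classical
  have hD (i : Fin k) : IsQF1 K Q (disjointed W i) := by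
    rw [disjointed_apply, Finset.sup_set_eq_biUnion]
    exact (hW i).sdiff (IsQF1.biUnion_finset _ fun j _ => hW j)
  choose X m N hN hDN using fun i => (hD i).exists_finset_nearInterval
  have hUD (i : Fin k) : ⋃ j, N i j ⊆ disjointed W i := hDN i ▸ subset_union_right
  have hXS (i : Fin k) : (X i : Set V) ⊆ S :=
    hSW ▸ (hDN i ▸ subset_union_left).trans ((disjointed_subset W i).trans (subset_iUnion W i))
  refine ⟨Finset.univ.biUnion X, fun i => ⋃ j, N i j, ?_, fun i => ?_, fun i j hij => ?_,
    fun i => ⟨m i, N i, fun j => (hN i j).1, rfl⟩, ?_, fun i => ?_⟩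
  · simpa using hXS
  · simpa using IsQF1.biUnion_finset Finset.univ fun j _ => (hN i j).2
  · exact (disjoint_disjointed W hij).mono (hUD i) (hUD j)
  · rw [hSW, ← iUnion_disjointed]
    ext x
    simp only [hDN, mem_iUnion, mem_union, Finset.coe_biUnion, Finset.coe_univ, mem_univ,
      iUnion_true]
    grind
  · obtain ⟨α, c, h⟩ := hf i
    exact ⟨α, c, fun x hx => h x (disjointed_subset W i (hUD i hx))⟩

end Decomposition

end POVS

theorem statement12
    (hsmul : ∀ (c : F) (x : M), 0 < c → 0 < x → 0 < c • x)
    (one : M)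
    (Q : Submodule F M) (hQproper : (Q : Set M) ≠ Set.univ)
    (hQdense : ∀ a b : M, a < b → ∃ q ∈ Q, a < q ∧ q < b)
    (S : Set M)
    (f : M → M)
    (hf : POVSDefinable F M one (Q : Set M) {x : Fin 2 → M | x 0 ∈ S ∧ f (x 0) = x 1}) :
    ∃ (X : Finset M) (k : ℕ) (U : Fin k → Set M),
      (X : Set M) ⊆ S ∧
      (∀ ℓ, POVSDefinable1 F M one (Q : Set M) (U ℓ)) ∧
      (Pairwise fun i j => Disjoint (U i) (U j)) ∧
      (∀ ℓ, ∃ (m : ℕ) (V : Fin m → Set M),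
        (∀ i, NearInterval M (Q : Set M) (V i)) ∧ U ℓ = ⋃ i, V i) ∧
      S = (X : Set M) ∪ ⋃ ℓ, U ℓ ∧
      (∀ ℓ, ∃ (α : F) (c : M), ∀ x ∈ U ℓ, f x = α • x + c) := by
  have : PosSMulStrictMono F M :=
    ⟨fun a ha b₁ b₂ hb => by simpa [smul_sub] using hsmul a (b₂ - b₁) ha (sub_pos.2 hb)⟩
  have hQ : POVS.IsDenseProper Q := ⟨fun h => hQproper (Submodule.coe_eq_univ.2 h), hQdense⟩
  let _ := LPStruc F M one Q
  have hG : Set.Definable univ (LP F)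
      {p : Fin 1 ⊕ Fin 1 → M | p (.inl 0) ∈ S ∧ f (p (.inl 0)) = p (.inr 0)} :=
    hf.preimage_comp (![.inl 0, .inr 0] : Fin 2 → Fin 1 ⊕ Fin 1)
  obtain ⟨k, W, hW, hSW, hWf⟩ := hQ.exists_affine_cover (hQ.isQF_of_definable one hG)
  obtain ⟨X, U, hXS, hU, hdisj, hnear, hSXU, hUf⟩ :=
    POVS.exists_decomposition_of_affine_cover hW hSW hWf
  exact ⟨X, k, U, hXS, fun ℓ => POVS.IsQF.definable one (hU ℓ), hdisj, hnear, hSXU, hUf⟩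
end
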